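/- ℓ1 bound on BN policy gradient differences: For any two tabular softmax BN policy parameter vectors θ̃ and θ and every agent i, ‖∇_{θ^i} V(θ̃) − ∇_{θ^i} V(θ)‖₁ ≤ (8(r_max − r_min)/(1−γ)³) · ∑_{j=1}^N ‖θ̃^j − θ^j‖₂. -/

import Mathlib

open Filter Topology
open scoped BigOperators Classical

namespace BNPG

variable {S : Type} [Fintype S] [DecidableEq S] [Nonempty S]
variable {N : ℕ} {A : Fin N → Type} [∀ i, Fintype (A i)] [∀ i, DecidableEq (A i)]
  [∀ i, Nonempty (A i)]

/-- Joint actions of all agents. -/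
abbrev JointAct (A : Fin N → Type) : Type := (i : Fin N) → A i

/-- Parent actions of agent `i`, given the parent sets `P`. -/
abbrev ParAct (A : Fin N → Type) (P : Fin N → Finset (Fin N)) (i : Fin N) : Type :=
  (j : {x : Fin N // x ∈ P i}) → A j.val

/-- Restriction of a joint action to agent `i`'s parents. -/
def restr (A : Fin N → Type) (P : Fin N → Finset (Fin N)) (i : Fin N) (a : JointAct A) :
    ParAct A P i := fun j => a j.val

/-- The parent relation forms a DAG: it admits a topological order. -/
def IsDAG (P : Fin N → Finset (Fin N)) : Prop :=
  ∃ ord : Fin N → ℕ, ∀ i : Fin N, ∀ j ∈ P i, ord j < ord i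

/-- Joint policies: a map from states to (signed) weights on joint actions. -/
abbrev Pol (S : Type) (A : Fin N → Type) : Type := S → JointAct A → ℝ

/-- `π` is a probability distribution over joint actions in every state. -/
def IsPol (π : Pol S A) : Prop := (∀ s a, 0 ≤ π s a) ∧ ∀ s, ∑ a, π s a = 1

/-- The transition function is a probability kernel. -/
def IsKernel (Ptr : S → JointAct A → S → ℝ) : Prop :=
  (∀ s a s', 0 ≤ Ptr s a s') ∧ ∀ s a, ∑ s', Ptr s a s' = 1

/-- `μ` is a probability distribution over states. -/
def IsDist (μ : S → ℝ) : Prop := (∀ s, 0 ≤ μ s) ∧ ∑ s, μ s = 1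

/-- Distribution of the state at time `t`, starting from initial distribution `ν`
and following joint policy `π` in the Markov game with transitions `Ptr`. -/
noncomputable def visit (Ptr : S → JointAct A → S → ℝ) (π : Pol S A) (ν : S → ℝ) :
    ℕ → S → ℝ
  | 0 => ν
  | t + 1 => fun s' => ∑ s, ∑ a, visit Ptr π ν t s * π s a * Ptr s a s'

/-- Discounted value `V_π(ν)` of policy `π` started from initial state distribution `ν`. -/
noncomputable def Vval (γ : ℝ) (Ptr : S → JointAct A → S → ℝ) (r : S → JointAct A → ℝ)
    (π : Pol S A) (ν : S → ℝ) : ℝ :=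
  ∑' t : ℕ, γ ^ t * ∑ s, ∑ a, visit Ptr π ν t s * π s a * r s a

/-- State value function `V_π(s)`. -/
noncomputable def VS (γ : ℝ) (Ptr : S → JointAct A → S → ℝ) (r : S → JointAct A → ℝ)
    (π : Pol S A) (s : S) : ℝ :=
  Vval γ Ptr r π (fun s' => if s' = s then 1 else 0)

/-- Action value function `Q_π(s,a)`. -/
noncomputable def Qa (γ : ℝ) (Ptr : S → JointAct A → S → ℝ) (r : S → JointAct A → ℝ)
    (π : Pol S A) (s : S) (a : JointAct A) : ℝ :=
  r s a + γ * ∑ s', Ptr s a s' * VS γ Ptr r π s'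

/-- (Unnormalized) discounted state visitation measure `d_ν^π(s)`. -/
noncomputable def dvisit (γ : ℝ) (Ptr : S → JointAct A → S → ℝ) (π : Pol S A)
    (ν : S → ℝ) (s : S) : ℝ :=
  ∑' t : ℕ, γ ^ t * visit Ptr π ν t s

/-- Tabular softmax parameters for a Bayesian network policy. -/
abbrev Param (S : Type) (A : Fin N → Type) (P : Fin N → Finset (Fin N)) : Type :=
  (i : Fin N) → S → ParAct A P i → A i → ℝ

/-- Local softmax policy of agent `i`: `π^i_{θ^i}(a^i | s, a^{P^i}) ∝ exp θ^i_{s,a^{P^i},a^i}`. -/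
noncomputable def locPol (P : Fin N → Finset (Fin N)) (θ : Param S A P) (i : Fin N) (s : S)
    (p : ParAct A P i) (ai : A i) : ℝ :=
  Real.exp (θ i s p ai) / ∑ b, Real.exp (θ i s p b)

/-- BN joint policy induced by arbitrary local policies: `π(a|s) = ∏ i π^i(a^i|s,a^{P^i})`. -/
noncomputable def bnPolGen (P : Fin N → Finset (Fin N))
    (π : (i : Fin N) → S → ParAct A P i → A i → ℝ) : Pol S A :=
  fun s a => ∏ i, π i s (restr A P i a) (a i)

/-- Tabular softmax BN joint policy. -/
noncomputable def bnPol (P : Fin N → Finset (Fin N)) (θ : Param S A P) : Pol S A :=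
  bnPolGen P (fun i => locPol P θ i)

/-- Coordinate basis vector of the parameter space at coordinate `(i, s, p, ai)`. -/
noncomputable def basis (P : Fin N → Finset (Fin N)) (i : Fin N) (s : S) (p : ParAct A P i)
    (ai : A i) : Param S A P :=
  Pi.single i (fun s' p' a' => if s' = s ∧ p' = p ∧ a' = ai then 1 else 0)

/-- Partial derivative of `f` with respect to the parameter coordinate `(i, s, p, ai)`. -/
noncomputable def pderiv (P : Fin N → Finset (Fin N)) (f : Param S A P → ℝ)
    (θ : Param S A P) (i : Fin N) (s : S) (p : ParAct A P i) (ai : A i) : ℝ :=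
  deriv (fun τ : ℝ => f (θ + τ • basis P i s p ai)) 0

/-- The policy gradient `∇_θ V_{π_θ}(μ)`, coordinatewise. -/
noncomputable def gradV (γ : ℝ) (Ptr : S → JointAct A → S → ℝ) (r : S → JointAct A → ℝ)
    (μ : S → ℝ) (P : Fin N → Finset (Fin N)) (θ : Param S A P) : Param S A P :=
  fun i s p ai => pderiv P (fun θ' => Vval γ Ptr r (bnPol P θ') μ) θ i s p ai

/-- Marginal probability `π^{P^i}(a^{P^i} | s)` of parent action `p` under joint policy `π`. -/
noncomputable def parentMarg (P : Fin N → Finset (Fin N)) (π : Pol S A) (i : Fin N) (s : S)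
    (p : ParAct A P i) : ℝ :=
  ∑ a, if restr A P i a = p then π s a else 0

/-- Conditional action value `Q_π(s, a^{P^i}) = E_{a^{-P^i} ∼ π(·|s,a^{P^i})}[Q_π(s,a)]`. -/
noncomputable def Qpar (γ : ℝ) (Ptr : S → JointAct A → S → ℝ) (r : S → JointAct A → ℝ)
    (P : Fin N → Finset (Fin N)) (π : Pol S A) (i : Fin N) (s : S) (p : ParAct A P i) : ℝ :=
  (∑ a, if restr A P i a = p then π s a * Qa γ Ptr r π s a else 0) / parentMarg P π i s p

/-- Conditional action value `Q_π(s, a^{P^i_+}) = E_{a^{-P^i_+} ∼ π(·|s,a^{P^i},a^i)}[Q_π(s,a)]`. -/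
noncomputable def QparPlus (γ : ℝ) (Ptr : S → JointAct A → S → ℝ) (r : S → JointAct A → ℝ)
    (P : Fin N → Finset (Fin N)) (π : Pol S A) (i : Fin N) (s : S) (p : ParAct A P i)
    (ai : A i) : ℝ :=
  (∑ a, if restr A P i a = p ∧ a i = ai then π s a * Qa γ Ptr r π s a else 0) /
    (∑ a, if restr A P i a = p ∧ a i = ai then π s a else 0)

/-- Advantage `A^i_π(s, a^{P^i}, a^i) = Q_π(s,a^{P^i_+}) − Q_π(s,a^{P^i})`. -/
noncomputable def Adv (γ : ℝ) (Ptr : S → JointAct A → S → ℝ) (r : S → JointAct A → ℝ)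
    (P : Fin N → Finset (Fin N)) (π : Pol S A) (i : Fin N) (s : S) (p : ParAct A P i)
    (ai : A i) : ℝ :=
  QparPlus γ Ptr r P π i s p ai - Qpar γ Ptr r P π i s p

/-- Augmented state visitation `d_μ^π(s, a^{P^i}) = d_μ^π(s) ⬝ π^{P^i}(a^{P^i}|s)`. -/
noncomputable def dAug (γ : ℝ) (Ptr : S → JointAct A → S → ℝ) (P : Fin N → Finset (Fin N))
    (π : Pol S A) (μ : S → ℝ) (i : Fin N) (s : S) (p : ParAct A P i) : ℝ :=
  dvisit γ Ptr π μ s * parentMarg P π i s p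

/-- Centered advantage `Ā^{π_θ,i}(s,a) = Q(s,a) − E_{ā^i ∼ π^i(·|s,a^{P^i})} Q(s,ā^i,a^{-i})`. -/
noncomputable def Abar (γ : ℝ) (Ptr : S → JointAct A → S → ℝ) (r : S → JointAct A → ℝ)
    (P : Fin N → Finset (Fin N)) (θ : Param S A P) (i : Fin N) (s : S) (a : JointAct A) : ℝ :=
  Qa γ Ptr r (bnPol P θ) s a -
    ∑ b : A i, locPol P θ i s (restr A P i a) b *
      Qa γ Ptr r (bnPol P θ) s (Function.update a i b)

/-- `Δ`: the minimal nonzero magnitude of the limiting advantages. -/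
noncomputable def Delta (P : Fin N → Finset (Fin N))
    (QplusInf : (i : Fin N) → S → ParAct A P i → A i → ℝ)
    (QmInf : (i : Fin N) → S → ParAct A P i → ℝ) : ℝ :=
  sInf {x : ℝ | ∃ (i : Fin N) (s : S) (p : ParAct A P i) (ai : A i),
    QplusInf i s p ai - QmInf i s p ≠ 0 ∧ x = |QplusInf i s p ai - QmInf i s p|}

set_option linter.unusedSectionVars false
set_option linter.unusedVariables false
section Aux
variable {S : Type} [Fintype S] [DecidableEq S] [Nonempty S]
variable {N : ℕ} {A : Fin N → Type} [∀ i, Fintype (A i)] [∀ i, DecidableEq (A i)]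
  [∀ i, Nonempty (A i)]

lemma sumexp_pos (P : Fin N → Finset (Fin N)) (θ : Param S A P) (i : Fin N) (s : S)
    (p : ParAct A P i) : 0 < ∑ b, Real.exp (θ i s p b) :=
  Finset.sum_pos (fun b _ => Real.exp_pos _) Finset.univ_nonempty

lemma locPol_pos (P : Fin N → Finset (Fin N)) (θ : Param S A P) (i : Fin N) (s : S)
    (p : ParAct A P i) (ai : A i) : 0 < locPol P θ i s p ai :=
  div_pos (Real.exp_pos _) (sumexp_pos P θ i s p)

lemma locPol_sum (P : Fin N → Finset (Fin N)) (θ : Param S A P) (i : Fin N) (s : S)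
    (p : ParAct A P i) : ∑ b, locPol P θ i s p b = 1 := by
  simp only [locPol, ← Finset.sum_div]
  exact div_self (sumexp_pos P θ i s p).ne'

/-- generic update-splitting of a sum over joint actions -/
lemma sum_update_split (i : Fin N) (b₀ : A i) (h : JointAct A → ℝ) :
    ∑ a : JointAct A, h a =
      ∑ a ∈ Finset.univ.filter (fun a : JointAct A => a i = b₀),
        ∑ b : A i, h (Function.update a i b) := by
  have := Finset.sum_nbij' (s := Finset.univ)
    (t := (Finset.univ.filter (fun a : JointAct A => a i = b₀)) ×ˢ (Finset.univ : Finset (A i)))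
    (i := fun a : JointAct A => (Function.update a i b₀, a i))
    (j := fun p : JointAct A × A i => Function.update p.1 i p.2)
    (f := h) (g := fun p => h (Function.update p.1 i p.2))
    ?_ ?_ ?_ ?_ ?_
  · rw [this, Finset.sum_product]
  · intro a _; simp [Function.update_self]
  · intro p _; exact Finset.mem_univ _
  · intro a _; simp [Function.update_idem, Function.update_eq_self]
  · intro p hp
    simp only [Finset.mem_product, Finset.mem_filter, Finset.mem_univ, true_and] at hp
    ext : 1
    · simp [Function.update_idem, ← hp.1, Function.update_eq_self]
    · simp
  · intro a _; simp [Function.update_idem, Function.update_eq_self]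

lemma bnPolGen_sum_one (P : Fin N → Finset (Fin N)) (hDAG : IsDAG P)
    (π : (i : Fin N) → S → ParAct A P i → A i → ℝ)
    (hπ : ∀ i s p, ∑ b, π i s p b = 1) (s : S) :
    ∑ a : JointAct A, bnPolGen P π s a = 1 := by
  obtain ⟨ord, hord⟩ := hDAG
  have key : ∀ T : Finset (Fin N),
      ∑ a : JointAct A, ∏ j ∈ T, π j s (restr A P j a) (a j)
        = ∏ j ∈ Tᶜ, (Fintype.card (A j) : ℝ) := by
    intro T
    induction T using Finset.strongInduction with
    | _ T ih =>
      rcases T.eq_empty_or_nonempty with rfl | hT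
      · simp [Finset.card_univ, ← Nat.cast_prod, ← Fintype.card_pi]
      obtain ⟨i, hiT, hmax⟩ := T.exists_max_image ord hT
      have hiP : ∀ j ∈ T, i ∉ P j := fun j hj hij =>
        absurd (hord j i hij) (not_lt.2 (hmax j hj))
      have hii : i ∉ P i := fun hii => lt_irrefl _ (hord i i hii)
      have hindep : ∀ j ∈ T.erase i, ∀ (a : JointAct A) (b : A i),
          π j s (restr A P j (Function.update a i b)) ((Function.update a i b) j)
            = π j s (restr A P j a) (a j) := by
        intro j hj a b
        have hji : j ≠ i := Finset.ne_of_mem_erase hj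
        have : restr A P j (Function.update a i b) = restr A P j a := by
          funext k
          have : k.val ≠ i := fun hk => hiP j (Finset.mem_of_mem_erase hj) (by have h2 := k.2; rw [hk] at h2; exact h2)
          simp [restr, Function.update_of_ne this]
        rw [this, Function.update_of_ne hji]
      have hrestri : ∀ (a : JointAct A) (b : A i),
          restr A P i (Function.update a i b) = restr A P i a := by
        intro a b; funext k
        have : k.val ≠ i := fun hk => hii (by have h2 := k.2; rw [hk] at h2; exact h2)
        simp [restr, Function.update_of_ne this]
      set b₀ : A i := Classical.arbitrary (A i)
      set F := Finset.univ.filter (fun a : JointAct A => a i = b₀) with hF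
      have A1 : ∑ a : JointAct A, ∏ j ∈ T, π j s (restr A P j a) (a j)
          = ∑ a ∈ F, ∏ j ∈ T.erase i, π j s (restr A P j a) (a j) := by
        rw [sum_update_split i b₀]
        refine Finset.sum_congr rfl fun a _ => ?_
        have : ∀ b : A i, ∏ j ∈ T, π j s (restr A P j (Function.update a i b))
            ((Function.update a i b) j)
            = π i s (restr A P i a) b * ∏ j ∈ T.erase i, π j s (restr A P j a) (a j) := by
          intro b
          rw [← Finset.mul_prod_erase _ _ hiT]
          congr 1
          · rw [hrestri, Function.update_self]
          · exact Finset.prod_congr rfl fun j hj => hindep j hj a b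
        simp only [this, ← Finset.sum_mul, hπ, one_mul]
      have A2 : ∑ a : JointAct A, ∏ j ∈ T.erase i, π j s (restr A P j a) (a j)
          = (Fintype.card (A i) : ℝ) *
            ∑ a ∈ F, ∏ j ∈ T.erase i, π j s (restr A P j a) (a j) := by
        rw [sum_update_split i b₀, Finset.mul_sum]
        refine Finset.sum_congr rfl fun a _ => ?_
        have : ∀ b : A i, ∏ j ∈ T.erase i, π j s (restr A P j (Function.update a i b))
            ((Function.update a i b) j)
            = ∏ j ∈ T.erase i, π j s (restr A P j a) (a j) :=
          fun b => Finset.prod_congr rfl fun j hj => hindep j hj a b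
        simp [this, Finset.sum_const, Finset.card_univ]
      have hcard : (0:ℝ) < (Fintype.card (A i) : ℝ) := by
        exact_mod_cast Fintype.card_pos
      have ihe := ih (T.erase i) (Finset.erase_ssubset hiT)
      rw [A2] at ihe
      have hcompl : (T.erase i)ᶜ = insert i Tᶜ := by
        ext j
        simp only [Finset.mem_compl, Finset.mem_erase, Finset.mem_insert]
        by_cases hj : j = i <;> simp [hj, hiT]
      rw [hcompl, Finset.prod_insert (by simp [hiT])] at ihe
      have := mul_left_cancel₀ hcard.ne' ihe
      rw [A1, this]
  have := key Finset.univ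
  simpa [bnPolGen] using this

lemma bnPol_nonneg (P : Fin N → Finset (Fin N)) (θ : Param S A P) (s : S) (a : JointAct A) :
    0 ≤ bnPol P θ s a := by
  unfold bnPol bnPolGen
  exact Finset.prod_nonneg fun j _ => (locPol_pos P θ j s _ (a j)).le

lemma bnPol_isPol (P : Fin N → Finset (Fin N)) (hDAG : IsDAG P) (θ : Param S A P) :
    IsPol (bnPol P θ) :=
  ⟨bnPol_nonneg P θ, fun s => bnPolGen_sum_one P hDAG _ (fun i s p => locPol_sum P θ i s p) s⟩

end Aux
section Aux2
variable {S : Type} [Fintype S] [DecidableEq S] [Nonempty S]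
variable {N : ℕ} {A : Fin N → Type} [∀ i, Fintype (A i)] [∀ i, DecidableEq (A i)]
  [∀ i, Nonempty (A i)]

lemma locPol_le_one (P : Fin N → Finset (Fin N)) (θ : Param S A P) (i : Fin N) (s : S)
    (p : ParAct A P i) (ai : A i) : locPol P θ i s p ai ≤ 1 := by
  rw [locPol, div_le_one (sumexp_pos P θ i s p)]
  exact Finset.single_le_sum (fun b _ => (Real.exp_pos _).le) (Finset.mem_univ ai)

lemma param_apply (P : Fin N → Finset (Fin N)) (θ d : Param S A P) (u : ℝ) (j : Fin N)
    (s : S) (p : ParAct A P j) (b : A j) :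
    (θ + u • d) j s p b = θ j s p b + u * d j s p b := rfl

/-- The score function (directional derivative of `log π`) in direction `d`. -/
noncomputable def score (P : Fin N → Finset (Fin N)) (d θ : Param S A P) (s : S)
    (a : JointAct A) : ℝ :=
  ∑ j, (d j s (restr A P j a) (a j) -
    ∑ b, locPol P θ j s (restr A P j a) b * d j s (restr A P j a) b)

lemma hasDerivAt_locPol (P : Fin N → Finset (Fin N)) (θ d : Param S A P) (j : Fin N)
    (s : S) (p : ParAct A P j) (b : A j) (u : ℝ) :
    HasDerivAt (fun u : ℝ => locPol P (θ + u • d) j s p b)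
      (locPol P (θ + u • d) j s p b *
        (d j s p b - ∑ b', locPol P (θ + u • d) j s p b' * d j s p b')) u := by
  have hnum : ∀ c : A j, HasDerivAt (fun u : ℝ => Real.exp ((θ + u • d) j s p c))
      (Real.exp ((θ + u • d) j s p c) * d j s p c) u := by
    intro c
    have h1 : HasDerivAt (fun u : ℝ => θ j s p c + u * d j s p c) (d j s p c) u := by
      simpa using ((hasDerivAt_id u).mul_const (d j s p c)).const_add (θ j s p c)
    simpa [param_apply] using h1.exp
  have hden : HasDerivAt (fun u : ℝ => ∑ c, Real.exp ((θ + u • d) j s p c))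
      (∑ c, Real.exp ((θ + u • d) j s p c) * d j s p c) u :=
    HasDerivAt.fun_sum (fun c _ => hnum c)
  have hpos := sumexp_pos P (θ + u • d) j s p
  have hdiv := (hnum b).div hden hpos.ne'
  refine hdiv.congr_deriv ?_
  symm
  simp only [locPol]
  have hrw : ∀ c : A j, Real.exp ((θ + u • d) j s p c) /
      (∑ x, Real.exp ((θ + u • d) j s p x)) * d j s p c
      = (Real.exp ((θ + u • d) j s p c) * d j s p c) /
        (∑ x, Real.exp ((θ + u • d) j s p x)) := fun c => div_mul_eq_mul_div _ _ _
  simp only [hrw, ← Finset.sum_div]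
  field_simp
lemma hasDerivAt_bnPol (P : Fin N → Finset (Fin N)) (θ d : Param S A P) (s : S)
    (a : JointAct A) (u : ℝ) :
    HasDerivAt (fun u : ℝ => bnPol P (θ + u • d) s a)
      (bnPol P (θ + u • d) s a * score P d (θ + u • d) s a) u := by
  have h := HasDerivAt.fun_finsetProd (u := (Finset.univ : Finset (Fin N))) (x := u)
    (f := fun j u => locPol P (θ + u • d) j s (restr A P j a) (a j))
    (f' := fun j => locPol P (θ + u • d) j s (restr A P j a) (a j) *
      (d j s (restr A P j a) (a j) -
        ∑ b', locPol P (θ + u • d) j s (restr A P j a) b' * d j s (restr A P j a) b'))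
    (fun j _ => hasDerivAt_locPol P θ d j s (restr A P j a) (a j) u)
  have hfun : (fun u : ℝ => bnPol P (θ + u • d) s a)
      = (fun x : ℝ => ∏ j, locPol P (θ + x • d) j s (restr A P j a) (a j)) := rfl
  rw [hfun]
  refine h.congr_deriv ?_
  symm
  rw [score, Finset.mul_sum]
  refine Finset.sum_congr rfl fun j _ => ?_
  rw [smul_eq_mul, ← mul_assoc, Finset.prod_erase_mul _ _ (Finset.mem_univ j)]
  rfl

lemma score_abs_le (P : Fin N → Finset (Fin N)) (d θ : Param S A P) (s : S) (a : JointAct A)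
    (B : Fin N → ℝ) (hB : ∀ j s p b, |d j s p b| ≤ B j) :
    |score P d θ s a| ≤ 2 * ∑ j, B j := by
  calc |score P d θ s a| ≤ ∑ j, |d j s (restr A P j a) (a j) -
      ∑ b, locPol P θ j s (restr A P j a) b * d j s (restr A P j a) b| :=
        Finset.abs_sum_le_sum_abs _ _
    _ ≤ ∑ j, 2 * B j := by
        refine Finset.sum_le_sum fun j _ => ?_
        have h1 : |∑ b, locPol P θ j s (restr A P j a) b * d j s (restr A P j a) b| ≤ B j := by
          calc |∑ b, locPol P θ j s (restr A P j a) b * d j s (restr A P j a) b|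
              ≤ ∑ b, |locPol P θ j s (restr A P j a) b * d j s (restr A P j a) b| :=
                Finset.abs_sum_le_sum_abs _ _
            _ ≤ ∑ b, locPol P θ j s (restr A P j a) b * B j := by
                refine Finset.sum_le_sum fun b _ => ?_
                rw [abs_mul, abs_of_pos (locPol_pos P θ j s _ b)]
                exact mul_le_mul_of_nonneg_left (hB j s _ b) (locPol_pos P θ j s _ b).le
            _ = B j := by rw [← Finset.sum_mul, locPol_sum, one_mul]
        calc _ ≤ |d j s (restr A P j a) (a j)| + _ := abs_sub _ _
          _ ≤ B j + B j := add_le_add (hB j s _ _) h1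
          _ = 2 * B j := by ring
    _ = 2 * ∑ j, B j := by rw [← Finset.mul_sum]

lemma score_basis (P : Fin N → Finset (Fin N)) (θ : Param S A P) (i : Fin N) (s₀ : S)
    (p₀ : ParAct A P i) (a₀ : A i) (s : S) (a : JointAct A) :
    score P (basis P i s₀ p₀ a₀) θ s a =
      if s = s₀ ∧ restr A P i a = p₀ then
        ((if a i = a₀ then (1:ℝ) else 0) - locPol P θ i s p₀ a₀) else 0 := by
  rw [score]
  rw [Finset.sum_eq_single_of_mem i (Finset.mem_univ i)]
  · simp only [basis, Pi.single_eq_same]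
    by_cases h : s = s₀ ∧ restr A P i a = p₀
    · rw [if_pos h]
      obtain ⟨h1, h2⟩ := h
      subst h1; subst h2
      simp [mul_ite, Finset.sum_ite_eq']
    · rw [if_neg h]
      have hz : ∀ b : A i, (if s = s₀ ∧ restr A P i a = p₀ ∧ b = a₀ then (1:ℝ) else 0) = 0 := by
        intro b
        rw [if_neg]
        rintro ⟨hs, hp, -⟩; exact h ⟨hs, hp⟩
      rw [hz (a i)]
      simp [hz]
  · intro j _ hj
    simp [basis, Pi.single_eq_of_ne hj]

/-- Derivative of the basis-direction score along the curve `θ + u • Δ`. -/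
noncomputable def scoreD (P : Fin N → Finset (Fin N)) (Δ θ : Param S A P) (i : Fin N)
    (s₀ : S) (p₀ : ParAct A P i) (a₀ : A i) (s : S) (a : JointAct A) : ℝ :=
  if s = s₀ ∧ restr A P i a = p₀ then
    -(locPol P θ i s p₀ a₀ * (Δ i s p₀ a₀ - ∑ b, locPol P θ i s p₀ b * Δ i s p₀ b)) else 0

lemma hasDerivAt_score_basis (P : Fin N → Finset (Fin N)) (θ Δ : Param S A P) (i : Fin N)
    (s₀ : S) (p₀ : ParAct A P i) (a₀ : A i) (s : S) (a : JointAct A) (u : ℝ) :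
    HasDerivAt (fun u : ℝ => score P (basis P i s₀ p₀ a₀) (θ + u • Δ) s a)
      (scoreD P Δ (θ + u • Δ) i s₀ p₀ a₀ s a) u := by
  have hfun : (fun u : ℝ => score P (basis P i s₀ p₀ a₀) (θ + u • Δ) s a)
      = fun u : ℝ => if s = s₀ ∧ restr A P i a = p₀ then
          ((if a i = a₀ then (1:ℝ) else 0) - locPol P (θ + u • Δ) i s p₀ a₀) else 0 := by
    funext u; exact score_basis P (θ + u • Δ) i s₀ p₀ a₀ s a
  rw [hfun, scoreD]
  by_cases h : s = s₀ ∧ restr A P i a = p₀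
  · simp only [if_pos h]
    exact (hasDerivAt_locPol P θ Δ i s p₀ a₀ u).const_sub _
  · simp only [if_neg h]
    exact hasDerivAt_const u 0

lemma sum_abs_score_basis_le (P : Fin N → Finset (Fin N)) (θ : Param S A P) (i : Fin N)
    (s : S) (a : JointAct A) :
    ∑ s₀ : S, ∑ p₀ : ParAct A P i, ∑ a₀ : A i,
      |score P (basis P i s₀ p₀ a₀) θ s a| ≤ 2 := by
  rw [Finset.sum_eq_single_of_mem s (Finset.mem_univ s)]
  · rw [Finset.sum_eq_single_of_mem (restr A P i a) (Finset.mem_univ _)]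
    · calc ∑ a₀ : A i, |score P (basis P i s (restr A P i a) a₀) θ s a|
          ≤ ∑ a₀ : A i, ((if a i = a₀ then (1:ℝ) else 0) + locPol P θ i s (restr A P i a) a₀) := by
            refine Finset.sum_le_sum fun a₀ _ => ?_
            rw [score_basis, if_pos ⟨rfl, rfl⟩]
            refine (abs_sub _ _).trans (add_le_add ?_ ?_)
            · split <;> simp
            · rw [abs_of_pos (locPol_pos P θ i s _ a₀)]
        _ = 1 + 1 := by
            rw [Finset.sum_add_distrib, locPol_sum]
            congr 1
            rw [Finset.sum_ite_eq Finset.univ (a i) (fun _ => (1:ℝ))]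
            simp
        _ = 2 := by norm_num
    · intro p₀ _ hp
      refine Finset.sum_eq_zero fun a₀ _ => ?_
      rw [score_basis, if_neg (by rintro ⟨-, h2⟩; exact hp h2.symm)]
      simp
  · intro s₀ _ hs
    refine Finset.sum_eq_zero fun p₀ _ => Finset.sum_eq_zero fun a₀ _ => ?_
    rw [score_basis, if_neg (by rintro ⟨h1, -⟩; exact hs h1.symm)]
    simp

lemma sum_abs_scoreD_le (P : Fin N → Finset (Fin N)) (Δ θ : Param S A P) (i : Fin N)
    (Bi : ℝ) (hB : ∀ s p b, |Δ i s p b| ≤ Bi) (s : S) (a : JointAct A) :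
    ∑ s₀ : S, ∑ p₀ : ParAct A P i, ∑ a₀ : A i,
      |scoreD P Δ θ i s₀ p₀ a₀ s a| ≤ 2 * Bi := by
  have key : ∀ s₀ p₀ a₀, |scoreD P Δ θ i s₀ p₀ a₀ s a| =
      if s = s₀ ∧ restr A P i a = p₀ then
        locPol P θ i s p₀ a₀ * |Δ i s p₀ a₀ - ∑ b, locPol P θ i s p₀ b * Δ i s p₀ b| else 0 := by
    intro s₀ p₀ a₀
    rw [scoreD]
    split
    · rw [abs_neg, abs_mul, abs_of_pos (locPol_pos P θ i s _ a₀)]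
    · simp
  simp only [key]
  rw [Finset.sum_eq_single_of_mem s (Finset.mem_univ s)]
  · rw [Finset.sum_eq_single_of_mem (restr A P i a) (Finset.mem_univ _)]
    · simp only [if_pos (⟨rfl, rfl⟩ : s = s ∧ restr A P i a = restr A P i a)]
      set p₀ := restr A P i a
      calc ∑ a₀ : A i, locPol P θ i s p₀ a₀ * |Δ i s p₀ a₀ - ∑ b, locPol P θ i s p₀ b * Δ i s p₀ b|
          ≤ ∑ a₀ : A i, locPol P θ i s p₀ a₀ * (2 * Bi) := by
            refine Finset.sum_le_sum fun a₀ _ => ?_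
            refine mul_le_mul_of_nonneg_left ?_ (locPol_pos P θ i s p₀ a₀).le
            refine (abs_sub _ _).trans ?_
            have h1 : |∑ b, locPol P θ i s p₀ b * Δ i s p₀ b| ≤ Bi := by
              refine (Finset.abs_sum_le_sum_abs _ _).trans ?_
              calc ∑ b, |locPol P θ i s p₀ b * Δ i s p₀ b|
                  ≤ ∑ b, locPol P θ i s p₀ b * Bi := by
                    refine Finset.sum_le_sum fun b _ => ?_
                    rw [abs_mul, abs_of_pos (locPol_pos P θ i s p₀ b)]
                    exact mul_le_mul_of_nonneg_left (hB s p₀ b) (locPol_pos P θ i s p₀ b).le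
                _ = Bi := by rw [← Finset.sum_mul, locPol_sum, one_mul]
            calc |Δ i s p₀ a₀| + _ ≤ Bi + Bi := add_le_add (hB s p₀ a₀) h1
              _ = 2 * Bi := by ring
        _ = 2 * Bi := by rw [← Finset.sum_mul, locPol_sum, one_mul]
    · intro p₀ _ hp
      refine Finset.sum_eq_zero fun a₀ _ => ?_
      rw [if_neg (by rintro ⟨-, h2⟩; exact hp h2.symm)]
  · intro s₀ _ hs
    refine Finset.sum_eq_zero fun p₀ _ => Finset.sum_eq_zero fun a₀ _ => ?_
    rw [if_neg (by rintro ⟨h1, -⟩; exact hs h1.symm)]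
lemma visit_nonneg (Ptr : S → JointAct A → S → ℝ) (π : Pol S A) (μ : S → ℝ)
    (hπ : ∀ s a, 0 ≤ π s a) (hPtr : ∀ s a s', 0 ≤ Ptr s a s') (hμ : ∀ s, 0 ≤ μ s) :
    ∀ t s, 0 ≤ visit Ptr π μ t s := by
  intro t
  induction t with
  | zero => exact hμ
  | succ t ih =>
    intro s'
    refine Finset.sum_nonneg fun s _ => Finset.sum_nonneg fun a _ => ?_
    exact mul_nonneg (mul_nonneg (ih s) (hπ s a)) (hPtr s a s')

lemma visit_mass (Ptr : S → JointAct A → S → ℝ) (π : Pol S A) (μ : S → ℝ)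
    (hπ : IsPol π) (hPtr : IsKernel Ptr) (hμ : IsDist μ) :
    ∀ t, ∑ s, visit Ptr π μ t s = 1 := by
  intro t
  induction t with
  | zero => exact hμ.2
  | succ t ih =>
    have : ∀ s a, ∑ s', visit Ptr π μ t s * π s a * Ptr s a s'
        = visit Ptr π μ t s * π s a := by
      intro s a; rw [← Finset.mul_sum, hPtr.2, mul_one]
    calc ∑ s', ∑ s, ∑ a, visit Ptr π μ t s * π s a * Ptr s a s'
        = ∑ s, ∑ a, ∑ s', visit Ptr π μ t s * π s a * Ptr s a s' := by
          rw [Finset.sum_comm]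
          exact Finset.sum_congr rfl fun s _ => Finset.sum_comm
      _ = ∑ s, ∑ a, visit Ptr π μ t s * π s a := by
          exact Finset.sum_congr rfl fun s _ => Finset.sum_congr rfl fun a _ => this s a
      _ = ∑ s, visit Ptr π μ t s := by
          refine Finset.sum_congr rfl fun s _ => ?_
          rw [← Finset.mul_sum, hπ.2, mul_one]
      _ = 1 := ih

/-- one-step ℓ1 contraction through the kernel -/
lemma l1_step (Ptr : S → JointAct A → S → ℝ) (hPtr : IsKernel Ptr)
    (g : S → JointAct A → ℝ) :
    ∑ s' : S, |∑ s, ∑ a, g s a * Ptr s a s'| ≤ ∑ s, ∑ a, |g s a| := by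
  calc ∑ s' : S, |∑ s, ∑ a, g s a * Ptr s a s'|
      ≤ ∑ s' : S, ∑ s, ∑ a, |g s a| * Ptr s a s' := by
        refine Finset.sum_le_sum fun s' _ => ?_
        refine (Finset.abs_sum_le_sum_abs _ _).trans ?_
        refine Finset.sum_le_sum fun s _ => ?_
        refine (Finset.abs_sum_le_sum_abs _ _).trans ?_
        refine Finset.sum_le_sum fun a _ => ?_
        rw [abs_mul, abs_of_nonneg (hPtr.1 s a s')]
    _ = ∑ s, ∑ a, |g s a| := by
        rw [Finset.sum_comm]
        refine Finset.sum_congr rfl fun s _ => ?_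
        rw [Finset.sum_comm]
        refine Finset.sum_congr rfl fun a _ => ?_
        rw [← Finset.mul_sum, hPtr.2, mul_one]

/-- derivative of `visit` in the parameter, direction `d` -/
noncomputable def wvec (Ptr : S → JointAct A → S → ℝ) (μ : S → ℝ)
    (P : Fin N → Finset (Fin N)) (d θ : Param S A P) : ℕ → S → ℝ
  | 0 => fun _ => 0
  | t + 1 => fun s' => ∑ s, ∑ a,
      (wvec Ptr μ P d θ t s * bnPol P θ s a
        + visit Ptr (bnPol P θ) μ t s * (bnPol P θ s a * score P d θ s a)) * Ptr s a s'

/-- derivative of `wvec (basis i s₀ p₀ a₀)` in the parameter, direction `Δ` -/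
noncomputable def yvec (Ptr : S → JointAct A → S → ℝ) (μ : S → ℝ)
    (P : Fin N → Finset (Fin N)) (Δ : Param S A P) (i : Fin N) (s₀ : S)
    (p₀ : ParAct A P i) (a₀ : A i) (θ : Param S A P) : ℕ → S → ℝ
  | 0 => fun _ => 0
  | t + 1 => fun s' => ∑ s, ∑ a,
      ((yvec Ptr μ P Δ i s₀ p₀ a₀ θ t s * bnPol P θ s a
          + wvec Ptr μ P (basis P i s₀ p₀ a₀) θ t s * (bnPol P θ s a * score P Δ θ s a))
        + (wvec Ptr μ P Δ θ t s * (bnPol P θ s a * score P (basis P i s₀ p₀ a₀) θ s a)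
          + visit Ptr (bnPol P θ) μ t s *
            (bnPol P θ s a * score P Δ θ s a * score P (basis P i s₀ p₀ a₀) θ s a
              + bnPol P θ s a * scoreD P Δ θ i s₀ p₀ a₀ s a))) * Ptr s a s'

lemma hasDerivAt_visit (Ptr : S → JointAct A → S → ℝ) (μ : S → ℝ)
    (P : Fin N → Finset (Fin N)) (θ Δ : Param S A P) (t : ℕ) (s : S) (u : ℝ) :
    HasDerivAt (fun u : ℝ => visit Ptr (bnPol P (θ + u • Δ)) μ t s)
      (wvec Ptr μ P Δ (θ + u • Δ) t s) u := by
  induction t generalizing s with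
  | zero => exact hasDerivAt_const u (μ s)
  | succ t ih =>
    show HasDerivAt (fun u : ℝ => ∑ s₁, ∑ a,
      visit Ptr (bnPol P (θ + u • Δ)) μ t s₁ * bnPol P (θ + u • Δ) s₁ a * Ptr s₁ a s) _ u
    refine HasDerivAt.fun_sum fun s₁ _ => HasDerivAt.fun_sum fun a _ => ?_
    exact ((ih s₁).mul (hasDerivAt_bnPol P θ Δ s₁ a u)).mul_const _

lemma hasDerivAt_wvec (Ptr : S → JointAct A → S → ℝ) (μ : S → ℝ)
    (P : Fin N → Finset (Fin N)) (θ Δ : Param S A P) (i : Fin N) (s₀ : S)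
    (p₀ : ParAct A P i) (a₀ : A i) (t : ℕ) (s : S) (u : ℝ) :
    HasDerivAt (fun u : ℝ => wvec Ptr μ P (basis P i s₀ p₀ a₀) (θ + u • Δ) t s)
      (yvec Ptr μ P Δ i s₀ p₀ a₀ (θ + u • Δ) t s) u := by
  induction t generalizing s with
  | zero => exact hasDerivAt_const u 0
  | succ t ih =>
    show HasDerivAt (fun u : ℝ => ∑ s₁, ∑ a,
      (wvec Ptr μ P (basis P i s₀ p₀ a₀) (θ + u • Δ) t s₁ * bnPol P (θ + u • Δ) s₁ a
        + visit Ptr (bnPol P (θ + u • Δ)) μ t s₁ *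
          (bnPol P (θ + u • Δ) s₁ a * score P (basis P i s₀ p₀ a₀) (θ + u • Δ) s₁ a))
        * Ptr s₁ a s) _ u
    refine HasDerivAt.fun_sum fun s₁ _ => HasDerivAt.fun_sum fun a _ => ?_
    refine HasDerivAt.mul_const ?_ _
    refine HasDerivAt.add ?_ ?_
    · exact (ih s₁).mul (hasDerivAt_bnPol P θ Δ s₁ a u)
    · refine (hasDerivAt_visit Ptr μ P θ Δ t s₁ u).mul ?_
      exact (hasDerivAt_bnPol P θ Δ s₁ a u).mul
        (hasDerivAt_score_basis P θ Δ i s₀ p₀ a₀ s₁ a u)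

lemma wvec_l1 (Ptr : S → JointAct A → S → ℝ) (μ : S → ℝ) (P : Fin N → Finset (Fin N))
    (hDAG : IsDAG P) (hPtr : IsKernel Ptr) (hμ : IsDist μ) (d θ : Param S A P) (K : ℝ)
    (hK : ∀ s a, |score P d θ s a| ≤ K) :
    ∀ t, ∑ s, |wvec Ptr μ P d θ t s| ≤ t * K := by
  have hπ := bnPol_isPol P hDAG θ
  have hv1 := visit_mass Ptr (bnPol P θ) μ hπ hPtr hμ
  have hv0 := visit_nonneg Ptr (bnPol P θ) μ hπ.1 hPtr.1 hμ.1
  have hK0 : 0 ≤ K := (abs_nonneg _).trans (hK (Classical.arbitrary S) (Classical.arbitrary _))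
  intro t
  induction t with
  | zero => simp [wvec]
  | succ t ih =>
    calc ∑ s', |wvec Ptr μ P d θ (t+1) s'|
        ≤ ∑ s, ∑ a, |wvec Ptr μ P d θ t s * bnPol P θ s a
            + visit Ptr (bnPol P θ) μ t s * (bnPol P θ s a * score P d θ s a)| :=
          l1_step Ptr hPtr _
      _ ≤ ∑ s, ∑ a, (|wvec Ptr μ P d θ t s| * bnPol P θ s a
            + visit Ptr (bnPol P θ) μ t s * (bnPol P θ s a * K)) := by
          refine Finset.sum_le_sum fun s _ => Finset.sum_le_sum fun a _ => ?_
          refine (abs_add_le _ _).trans (add_le_add ?_ ?_)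
          · rw [abs_mul, abs_of_nonneg (hπ.1 s a)]
          · rw [abs_mul, abs_mul, abs_of_nonneg (hv0 t s), abs_of_nonneg (hπ.1 s a)]
            exact mul_le_mul_of_nonneg_left
              (mul_le_mul_of_nonneg_left (hK s a) (hπ.1 s a)) (hv0 t s)
      _ = (∑ s, (|wvec Ptr μ P d θ t s| + visit Ptr (bnPol P θ) μ t s * K)) := by
          refine Finset.sum_congr rfl fun s _ => ?_
          rw [Finset.sum_add_distrib, ← Finset.mul_sum, hπ.2, mul_one]
          congr 1
          rw [← Finset.mul_sum, ← Finset.sum_mul, hπ.2, one_mul]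
      _ = (∑ s, |wvec Ptr μ P d θ t s|) + K := by
          rw [Finset.sum_add_distrib, ← Finset.sum_mul, hv1 t, one_mul]
      _ ≤ t * K + K := by linarith
      _ = (t + 1 : ℕ) * K := by push_cast; ring

lemma sum_c_swap {β₁ β₂ α₁ α₂ α₃ : Type} [Fintype β₁] [Fintype β₂] [Fintype α₁]
    [Fintype α₂] [Fintype α₃] (F : α₁ → α₂ → α₃ → β₁ → β₂ → ℝ) :
    ∑ x₁, ∑ x₂, ∑ x₃, ∑ y₁, ∑ y₂, F x₁ x₂ x₃ y₁ y₂
      = ∑ y₁, ∑ y₂, ∑ x₁, ∑ x₂, ∑ x₃, F x₁ x₂ x₃ y₁ y₂ := by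
  calc ∑ x₁, ∑ x₂, ∑ x₃, ∑ y₁, ∑ y₂, F x₁ x₂ x₃ y₁ y₂
      = ∑ x₁, ∑ x₂, ∑ y₁, ∑ y₂, ∑ x₃, F x₁ x₂ x₃ y₁ y₂ := by
        refine Finset.sum_congr rfl fun x₁ _ => Finset.sum_congr rfl fun x₂ _ => ?_
        rw [Finset.sum_comm]
        exact Finset.sum_congr rfl fun y₁ _ => Finset.sum_comm
    _ = ∑ x₁, ∑ y₁, ∑ y₂, ∑ x₂, ∑ x₃, F x₁ x₂ x₃ y₁ y₂ := by
        refine Finset.sum_congr rfl fun x₁ _ => ?_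
        rw [Finset.sum_comm]
        exact Finset.sum_congr rfl fun y₁ _ => Finset.sum_comm
    _ = ∑ y₁, ∑ y₂, ∑ x₁, ∑ x₂, ∑ x₃, F x₁ x₂ x₃ y₁ y₂ := by
        rw [Finset.sum_comm]
        exact Finset.sum_congr rfl fun y₁ _ => Finset.sum_comm

lemma wvec_l1_csum (Ptr : S → JointAct A → S → ℝ) (μ : S → ℝ) (P : Fin N → Finset (Fin N))
    (hDAG : IsDAG P) (hPtr : IsKernel Ptr) (hμ : IsDist μ) (θ : Param S A P) (i : Fin N) :
    ∀ t, ∑ s₀ : S, ∑ p₀ : ParAct A P i, ∑ a₀ : A i,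
      ∑ s, |wvec Ptr μ P (basis P i s₀ p₀ a₀) θ t s| ≤ 2 * t := by
  have hπ := bnPol_isPol P hDAG θ
  have hv1 := visit_mass Ptr (bnPol P θ) μ hπ hPtr hμ
  have hv0 := visit_nonneg Ptr (bnPol P θ) μ hπ.1 hPtr.1 hμ.1
  intro t
  induction t with
  | zero => simp [wvec]
  | succ t ih =>
    have step : ∀ s₀ p₀ a₀, ∑ s', |wvec Ptr μ P (basis P i s₀ p₀ a₀) θ (t+1) s'|
        ≤ (∑ s, |wvec Ptr μ P (basis P i s₀ p₀ a₀) θ t s|)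
          + ∑ s, ∑ a, visit Ptr (bnPol P θ) μ t s *
              (bnPol P θ s a * |score P (basis P i s₀ p₀ a₀) θ s a|) := by
      intro s₀ p₀ a₀
      refine (l1_step Ptr hPtr _).trans ?_
      calc ∑ s, ∑ a, |wvec Ptr μ P (basis P i s₀ p₀ a₀) θ t s * bnPol P θ s a
            + visit Ptr (bnPol P θ) μ t s *
              (bnPol P θ s a * score P (basis P i s₀ p₀ a₀) θ s a)|
          ≤ ∑ s, ∑ a, (|wvec Ptr μ P (basis P i s₀ p₀ a₀) θ t s| * bnPol P θ s a
            + visit Ptr (bnPol P θ) μ t s *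
              (bnPol P θ s a * |score P (basis P i s₀ p₀ a₀) θ s a|)) := by
            refine Finset.sum_le_sum fun s _ => Finset.sum_le_sum fun a _ => ?_
            refine (abs_add_le _ _).trans (le_of_eq ?_)
            rw [abs_mul, abs_of_nonneg (hπ.1 s a), abs_mul, abs_of_nonneg (hv0 t s),
              abs_mul, abs_of_nonneg (hπ.1 s a)]
        _ = _ := by
            simp only [Finset.sum_add_distrib]
            congr 1
            refine Finset.sum_congr rfl fun s _ => ?_
            rw [← Finset.mul_sum, hπ.2, mul_one]
    calc ∑ s₀ : S, ∑ p₀ : ParAct A P i, ∑ a₀ : A i,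
          ∑ s, |wvec Ptr μ P (basis P i s₀ p₀ a₀) θ (t+1) s|
        ≤ ∑ s₀ : S, ∑ p₀ : ParAct A P i, ∑ a₀ : A i,
            ((∑ s, |wvec Ptr μ P (basis P i s₀ p₀ a₀) θ t s|)
              + ∑ s, ∑ a, visit Ptr (bnPol P θ) μ t s *
                (bnPol P θ s a * |score P (basis P i s₀ p₀ a₀) θ s a|)) := by
          refine Finset.sum_le_sum fun s₀ _ => Finset.sum_le_sum fun p₀ _ =>
            Finset.sum_le_sum fun a₀ _ => step s₀ p₀ a₀
      _ = (∑ s₀ : S, ∑ p₀ : ParAct A P i, ∑ a₀ : A i,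
            ∑ s, |wvec Ptr μ P (basis P i s₀ p₀ a₀) θ t s|)
          + ∑ s₀ : S, ∑ p₀ : ParAct A P i, ∑ a₀ : A i, ∑ s, ∑ a,
              visit Ptr (bnPol P θ) μ t s *
                (bnPol P θ s a * |score P (basis P i s₀ p₀ a₀) θ s a|) := by
          simp only [Finset.sum_add_distrib]
      _ ≤ 2 * t + 2 := by
          refine add_le_add ih ?_
          rw [sum_c_swap (fun s₀ p₀ a₀ s a => visit Ptr (bnPol P θ) μ t s *
            (bnPol P θ s a * |score P (basis P i s₀ p₀ a₀) θ s a|))]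
          calc ∑ s, ∑ a, ∑ s₀ : S, ∑ p₀ : ParAct A P i, ∑ a₀ : A i,
                visit Ptr (bnPol P θ) μ t s *
                  (bnPol P θ s a * |score P (basis P i s₀ p₀ a₀) θ s a|)
              ≤ ∑ s, ∑ a, visit Ptr (bnPol P θ) μ t s * (bnPol P θ s a * 2) := by
                refine Finset.sum_le_sum fun s _ => Finset.sum_le_sum fun a _ => ?_
                simp only [← Finset.mul_sum]
                refine mul_le_mul_of_nonneg_left ?_ (hv0 t s)
                exact mul_le_mul_of_nonneg_left (sum_abs_score_basis_le P θ i s a) (hπ.1 s a)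
            _ = 2 := by
                have : ∀ s, ∑ a, visit Ptr (bnPol P θ) μ t s * (bnPol P θ s a * 2)
                    = visit Ptr (bnPol P θ) μ t s * 2 := by
                  intro s
                  rw [← Finset.mul_sum, ← Finset.sum_mul, hπ.2, one_mul]
                rw [Finset.sum_congr rfl fun s _ => this s, ← Finset.sum_mul, hv1, one_mul]
      _ = 2 * (t + 1 : ℕ) := by push_cast; ring
lemma yvec_l1_csum (Ptr : S → JointAct A → S → ℝ) (μ : S → ℝ) (P : Fin N → Finset (Fin N))
    (hDAG : IsDAG P) (hPtr : IsKernel Ptr) (hμ : IsDist μ) (Δ θ : Param S A P) (i : Fin N)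
    (D : ℝ) (hD0 : 0 ≤ D)
    (hscΔ : ∀ s a, |score P Δ θ s a| ≤ 2 * D)
    (hΔi : ∀ s p b, |Δ i s p b| ≤ D) :
    ∀ t, ∑ s₀ : S, ∑ p₀ : ParAct A P i, ∑ a₀ : A i,
      ∑ s, |yvec Ptr μ P Δ i s₀ p₀ a₀ θ t s| ≤ 4*D*(t:ℝ)^2 + 2*D*t := by
  have hπ := bnPol_isPol P hDAG θ
  have hv1 := visit_mass Ptr (bnPol P θ) μ hπ hPtr hμ
  have hv0 := visit_nonneg Ptr (bnPol P θ) μ hπ.1 hPtr.1 hμ.1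
  have hwΔ := wvec_l1 Ptr μ P hDAG hPtr hμ Δ θ (2*D) hscΔ
  have hWt := wvec_l1_csum Ptr μ P hDAG hPtr hμ θ i
  intro t
  induction t with
  | zero => simp [yvec]
  | succ t ih =>
    have step : ∀ s₀ p₀ a₀, ∑ s', |yvec Ptr μ P Δ i s₀ p₀ a₀ θ (t+1) s'|
        ≤ ∑ s, ∑ a,
          (|yvec Ptr μ P Δ i s₀ p₀ a₀ θ t s| * bnPol P θ s a
          + |wvec Ptr μ P (basis P i s₀ p₀ a₀) θ t s| * (bnPol P θ s a * (2*D))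
          + (|wvec Ptr μ P Δ θ t s| * (bnPol P θ s a * |score P (basis P i s₀ p₀ a₀) θ s a|)
          + visit Ptr (bnPol P θ) μ t s *
              (bnPol P θ s a * (2*D) * |score P (basis P i s₀ p₀ a₀) θ s a|
                + bnPol P θ s a * |scoreD P Δ θ i s₀ p₀ a₀ s a|))) := by
      intro s₀ p₀ a₀
      refine (l1_step Ptr hPtr _).trans ?_
      refine Finset.sum_le_sum fun s _ => Finset.sum_le_sum fun a _ => ?_
      have hπn := hπ.1 s a
      have hvn := hv0 t s
      refine (abs_add_le _ _).trans (add_le_add ?_ ?_)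
      · refine (abs_add_le _ _).trans (add_le_add (le_of_eq ?_) ?_)
        · rw [abs_mul, abs_of_nonneg hπn]
        · rw [abs_mul]
          refine mul_le_mul_of_nonneg_left ?_ (abs_nonneg _)
          rw [abs_mul, abs_of_nonneg hπn]
          exact mul_le_mul_of_nonneg_left (hscΔ s a) hπn
      · refine (abs_add_le _ _).trans (add_le_add ?_ ?_)
        · rw [abs_mul]
          refine mul_le_mul_of_nonneg_left (le_of_eq ?_) (abs_nonneg _)
          rw [abs_mul, abs_of_nonneg hπn]
        · rw [abs_mul, abs_of_nonneg hvn]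
          refine mul_le_mul_of_nonneg_left ((abs_add_le _ _).trans (add_le_add ?_ ?_)) hvn
          · rw [abs_mul]
            refine mul_le_mul_of_nonneg_right ?_ (abs_nonneg _)
            rw [abs_mul, abs_of_nonneg hπn]
            exact mul_le_mul_of_nonneg_left (hscΔ s a) hπn
          · rw [abs_mul, abs_of_nonneg hπn]
    have main : ∑ s₀ : S, ∑ p₀ : ParAct A P i, ∑ a₀ : A i,
        ∑ s, |yvec Ptr μ P Δ i s₀ p₀ a₀ θ (t+1) s|
        ≤ (∑ s₀ : S, ∑ p₀ : ParAct A P i, ∑ a₀ : A i,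
            ∑ s, |yvec Ptr μ P Δ i s₀ p₀ a₀ θ t s|)
          + (2*D) * (2*t) + (2*(2*D*t)) + 6*D := by
      refine le_trans (Finset.sum_le_sum fun s₀ _ => Finset.sum_le_sum fun p₀ _ =>
        Finset.sum_le_sum fun a₀ _ => step s₀ p₀ a₀) ?_
      simp only [Finset.sum_add_distrib]
      have hG1 : ∑ s₀ : S, ∑ p₀ : ParAct A P i, ∑ a₀ : A i, ∑ s, ∑ a,
          |yvec Ptr μ P Δ i s₀ p₀ a₀ θ t s| * bnPol P θ s a
          = ∑ s₀ : S, ∑ p₀ : ParAct A P i, ∑ a₀ : A i,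
              ∑ s, |yvec Ptr μ P Δ i s₀ p₀ a₀ θ t s| := by
        refine Finset.sum_congr rfl fun s₀ _ => Finset.sum_congr rfl fun p₀ _ =>
          Finset.sum_congr rfl fun a₀ _ => Finset.sum_congr rfl fun s _ => ?_
        rw [← Finset.mul_sum, hπ.2, mul_one]
      have hG2 : ∑ s₀ : S, ∑ p₀ : ParAct A P i, ∑ a₀ : A i, ∑ s, ∑ a,
          |wvec Ptr μ P (basis P i s₀ p₀ a₀) θ t s| * (bnPol P θ s a * (2*D))
          ≤ (2*D) * (2*t) := by
        have e1 : ∀ s₀ p₀ a₀, ∑ s, ∑ a,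
            |wvec Ptr μ P (basis P i s₀ p₀ a₀) θ t s| * (bnPol P θ s a * (2*D))
            = (∑ s, |wvec Ptr μ P (basis P i s₀ p₀ a₀) θ t s|) * (2*D) := by
          intro s₀ p₀ a₀
          rw [Finset.sum_mul]
          refine Finset.sum_congr rfl fun s _ => ?_
          rw [← Finset.mul_sum, ← Finset.sum_mul, hπ.2, one_mul]
        simp only [e1, ← Finset.sum_mul]
        rw [mul_comm]
        exact mul_le_mul_of_nonneg_left (hWt t) (by linarith)
      have hG3 : ∑ s₀ : S, ∑ p₀ : ParAct A P i, ∑ a₀ : A i, ∑ s, ∑ a,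
          |wvec Ptr μ P Δ θ t s| * (bnPol P θ s a * |score P (basis P i s₀ p₀ a₀) θ s a|)
          ≤ 2*(2*D*t) := by
        rw [sum_c_swap (fun s₀ p₀ a₀ s a => |wvec Ptr μ P Δ θ t s| *
          (bnPol P θ s a * |score P (basis P i s₀ p₀ a₀) θ s a|))]
        calc ∑ s, ∑ a, ∑ s₀ : S, ∑ p₀ : ParAct A P i, ∑ a₀ : A i,
              |wvec Ptr μ P Δ θ t s| *
                (bnPol P θ s a * |score P (basis P i s₀ p₀ a₀) θ s a|)
            ≤ ∑ s, ∑ a, |wvec Ptr μ P Δ θ t s| * (bnPol P θ s a * 2) := by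
              refine Finset.sum_le_sum fun s _ => Finset.sum_le_sum fun a _ => ?_
              simp only [← Finset.mul_sum]
              refine mul_le_mul_of_nonneg_left ?_ (abs_nonneg _)
              exact mul_le_mul_of_nonneg_left (sum_abs_score_basis_le P θ i s a) (hπ.1 s a)
          _ = (∑ s, |wvec Ptr μ P Δ θ t s|) * 2 := by
              rw [Finset.sum_mul]
              refine Finset.sum_congr rfl fun s _ => ?_
              rw [← Finset.mul_sum, ← Finset.sum_mul, hπ.2, one_mul]
          _ ≤ 2*(2*D*t) := by
              have := hwΔ t
              nlinarith [hwΔ t]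
      have hG4 : ∑ s₀ : S, ∑ p₀ : ParAct A P i, ∑ a₀ : A i, ∑ s, ∑ a,
          visit Ptr (bnPol P θ) μ t s *
            (bnPol P θ s a * (2*D) * |score P (basis P i s₀ p₀ a₀) θ s a|
              + bnPol P θ s a * |scoreD P Δ θ i s₀ p₀ a₀ s a|)
          ≤ 6*D := by
        rw [sum_c_swap (fun s₀ p₀ a₀ s a => visit Ptr (bnPol P θ) μ t s *
          (bnPol P θ s a * (2*D) * |score P (basis P i s₀ p₀ a₀) θ s a|
            + bnPol P θ s a * |scoreD P Δ θ i s₀ p₀ a₀ s a|))]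
        calc ∑ s, ∑ a, ∑ s₀ : S, ∑ p₀ : ParAct A P i, ∑ a₀ : A i,
              visit Ptr (bnPol P θ) μ t s *
                (bnPol P θ s a * (2*D) * |score P (basis P i s₀ p₀ a₀) θ s a|
                  + bnPol P θ s a * |scoreD P Δ θ i s₀ p₀ a₀ s a|)
            ≤ ∑ s, ∑ a, visit Ptr (bnPol P θ) μ t s * (bnPol P θ s a * (6*D)) := by
              refine Finset.sum_le_sum fun s _ => Finset.sum_le_sum fun a _ => ?_
              simp only [← Finset.mul_sum]
              refine mul_le_mul_of_nonneg_left ?_ (hv0 t s)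
              simp only [Finset.sum_add_distrib]
              have h1 : ∑ s₀ : S, ∑ p₀ : ParAct A P i, ∑ a₀ : A i,
                  bnPol P θ s a * (2*D) * |score P (basis P i s₀ p₀ a₀) θ s a|
                  ≤ bnPol P θ s a * (2*D) * 2 := by
                simp only [← Finset.mul_sum]
                refine mul_le_mul_of_nonneg_left (sum_abs_score_basis_le P θ i s a) ?_
                have := hπ.1 s a; nlinarith
              have h2 : ∑ s₀ : S, ∑ p₀ : ParAct A P i, ∑ a₀ : A i,
                  bnPol P θ s a * |scoreD P Δ θ i s₀ p₀ a₀ s a|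
                  ≤ bnPol P θ s a * (2*D) := by
                simp only [← Finset.mul_sum]
                exact mul_le_mul_of_nonneg_left
                  (sum_abs_scoreD_le P Δ θ i D hΔi s a) (hπ.1 s a)
              calc _ ≤ bnPol P θ s a * (2*D) * 2 + bnPol P θ s a * (2*D) :=
                    add_le_add h1 h2
                _ = bnPol P θ s a * (6*D) := by ring
          _ = 6*D := by
              have e : ∀ s, ∑ a, visit Ptr (bnPol P θ) μ t s * (bnPol P θ s a * (6*D))
                  = visit Ptr (bnPol P θ) μ t s * (6*D) := by
                intro s
                rw [← Finset.mul_sum, ← Finset.sum_mul, hπ.2, one_mul]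
              rw [Finset.sum_congr rfl fun s _ => e s, ← Finset.sum_mul, hv1, one_mul]
      rw [hG1]
      have := add_le_add (add_le_add (add_le_add (le_refl (∑ s₀ : S, ∑ p₀ : ParAct A P i,
        ∑ a₀ : A i, ∑ s, |yvec Ptr μ P Δ i s₀ p₀ a₀ θ t s|)) hG2) hG3) hG4
      linarith [this]
    refine main.trans ?_
    have := ih
    push_cast
    nlinarith [hD0, Nat.cast_nonneg (α := ℝ) t]
/-- the `t`-th term of the value series (with reward `f`) -/
noncomputable def Tterm (Ptr : S → JointAct A → S → ℝ) (μ : S → ℝ)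
    (P : Fin N → Finset (Fin N)) (f : S → JointAct A → ℝ) (θ : Param S A P) (t : ℕ) : ℝ :=
  ∑ s, ∑ a, visit Ptr (bnPol P θ) μ t s * bnPol P θ s a * f s a

noncomputable def Tder (Ptr : S → JointAct A → S → ℝ) (μ : S → ℝ)
    (P : Fin N → Finset (Fin N)) (f : S → JointAct A → ℝ) (d θ : Param S A P) (t : ℕ) : ℝ :=
  ∑ s, ∑ a, (wvec Ptr μ P d θ t s * bnPol P θ s a
    + visit Ptr (bnPol P θ) μ t s * (bnPol P θ s a * score P d θ s a)) * f s a

noncomputable def TderD (Ptr : S → JointAct A → S → ℝ) (μ : S → ℝ)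
    (P : Fin N → Finset (Fin N)) (f : S → JointAct A → ℝ) (Δ : Param S A P) (i : Fin N)
    (s₀ : S) (p₀ : ParAct A P i) (a₀ : A i) (θ : Param S A P) (t : ℕ) : ℝ :=
  ∑ s, ∑ a, ((yvec Ptr μ P Δ i s₀ p₀ a₀ θ t s * bnPol P θ s a
      + wvec Ptr μ P (basis P i s₀ p₀ a₀) θ t s * (bnPol P θ s a * score P Δ θ s a))
    + (wvec Ptr μ P Δ θ t s * (bnPol P θ s a * score P (basis P i s₀ p₀ a₀) θ s a)
      + visit Ptr (bnPol P θ) μ t s *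
          (bnPol P θ s a * score P Δ θ s a * score P (basis P i s₀ p₀ a₀) θ s a
            + bnPol P θ s a * scoreD P Δ θ i s₀ p₀ a₀ s a))) * f s a

lemma hasDerivAt_Tterm (Ptr : S → JointAct A → S → ℝ) (μ : S → ℝ)
    (P : Fin N → Finset (Fin N)) (f : S → JointAct A → ℝ) (θ d : Param S A P) (t : ℕ)
    (u : ℝ) :
    HasDerivAt (fun u : ℝ => Tterm Ptr μ P f (θ + u • d) t)
      (Tder Ptr μ P f d (θ + u • d) t) u := by
  refine HasDerivAt.fun_sum fun s _ => HasDerivAt.fun_sum fun a _ => ?_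
  exact ((hasDerivAt_visit Ptr μ P θ d t s u).mul
    (hasDerivAt_bnPol P θ d s a u)).mul_const _

lemma hasDerivAt_Tder (Ptr : S → JointAct A → S → ℝ) (μ : S → ℝ)
    (P : Fin N → Finset (Fin N)) (f : S → JointAct A → ℝ) (θ Δ : Param S A P) (i : Fin N)
    (s₀ : S) (p₀ : ParAct A P i) (a₀ : A i) (t : ℕ) (u : ℝ) :
    HasDerivAt (fun u : ℝ => Tder Ptr μ P f (basis P i s₀ p₀ a₀) (θ + u • Δ) t)
      (TderD Ptr μ P f Δ i s₀ p₀ a₀ (θ + u • Δ) t) u := by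
  refine HasDerivAt.fun_sum fun s _ => HasDerivAt.fun_sum fun a _ => ?_
  refine HasDerivAt.mul_const ?_ _
  refine HasDerivAt.add ?_ ?_
  · exact (hasDerivAt_wvec Ptr μ P θ Δ i s₀ p₀ a₀ t s u).mul (hasDerivAt_bnPol P θ Δ s a u)
  · refine (hasDerivAt_visit Ptr μ P θ Δ t s u).mul ?_
    exact (hasDerivAt_bnPol P θ Δ s a u).mul
      (hasDerivAt_score_basis P θ Δ i s₀ p₀ a₀ s a u)

lemma Tterm_abs_le (Ptr : S → JointAct A → S → ℝ) (μ : S → ℝ) (P : Fin N → Finset (Fin N))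
    (hDAG : IsDAG P) (hPtr : IsKernel Ptr) (hμ : IsDist μ) (f : S → JointAct A → ℝ)
    (C : ℝ) (hf : ∀ s a, |f s a| ≤ C) (θ : Param S A P) (t : ℕ) :
    |Tterm Ptr μ P f θ t| ≤ C := by
  have hπ := bnPol_isPol P hDAG θ
  have hv1 := visit_mass Ptr (bnPol P θ) μ hπ hPtr hμ
  have hv0 := visit_nonneg Ptr (bnPol P θ) μ hπ.1 hPtr.1 hμ.1
  calc |Tterm Ptr μ P f θ t|
      ≤ ∑ s, ∑ a, visit Ptr (bnPol P θ) μ t s * bnPol P θ s a * C := by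
        refine (Finset.abs_sum_le_sum_abs _ _).trans ?_
        refine Finset.sum_le_sum fun s _ => ?_
        refine (Finset.abs_sum_le_sum_abs _ _).trans ?_
        refine Finset.sum_le_sum fun a _ => ?_
        rw [abs_mul, abs_mul, abs_of_nonneg (hv0 t s), abs_of_nonneg (hπ.1 s a)]
        exact mul_le_mul_of_nonneg_left (hf s a)
          (mul_nonneg (hv0 t s) (hπ.1 s a))
    _ = C := by
        have e : ∀ s, ∑ a, visit Ptr (bnPol P θ) μ t s * bnPol P θ s a * C
            = visit Ptr (bnPol P θ) μ t s * C := by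
          intro s
          rw [← Finset.sum_mul, ← Finset.mul_sum, hπ.2, mul_one]
        rw [Finset.sum_congr rfl fun s _ => e s, ← Finset.sum_mul, hv1, one_mul]

lemma Tder_abs_le (Ptr : S → JointAct A → S → ℝ) (μ : S → ℝ) (P : Fin N → Finset (Fin N))
    (hDAG : IsDAG P) (hPtr : IsKernel Ptr) (hμ : IsDist μ) (f : S → JointAct A → ℝ)
    (C : ℝ) (hC0 : 0 ≤ C) (hf : ∀ s a, |f s a| ≤ C) (d θ : Param S A P) (K : ℝ)
    (hK : ∀ s a, |score P d θ s a| ≤ K) (t : ℕ) :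
    |Tder Ptr μ P f d θ t| ≤ (t * K + K) * C := by
  have hπ := bnPol_isPol P hDAG θ
  have hv1 := visit_mass Ptr (bnPol P θ) μ hπ hPtr hμ
  have hv0 := visit_nonneg Ptr (bnPol P θ) μ hπ.1 hPtr.1 hμ.1
  have hw := wvec_l1 Ptr μ P hDAG hPtr hμ d θ K hK t
  have hK0 : 0 ≤ K := (abs_nonneg _).trans (hK (Classical.arbitrary S) (Classical.arbitrary _))
  calc |Tder Ptr μ P f d θ t|
      ≤ ∑ s, ∑ a, (|wvec Ptr μ P d θ t s| * bnPol P θ s a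
          + visit Ptr (bnPol P θ) μ t s * (bnPol P θ s a * K)) * C := by
        refine (Finset.abs_sum_le_sum_abs _ _).trans ?_
        refine Finset.sum_le_sum fun s _ => ?_
        refine (Finset.abs_sum_le_sum_abs _ _).trans ?_
        refine Finset.sum_le_sum fun a _ => ?_
        rw [abs_mul]
        refine mul_le_mul ?_ (hf s a) (abs_nonneg _) ?_
        · refine (abs_add_le _ _).trans (add_le_add (le_of_eq ?_) ?_)
          · rw [abs_mul, abs_of_nonneg (hπ.1 s a)]
          · rw [abs_mul, abs_of_nonneg (hv0 t s), abs_mul, abs_of_nonneg (hπ.1 s a)]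
            exact mul_le_mul_of_nonneg_left
              (mul_le_mul_of_nonneg_left (hK s a) (hπ.1 s a)) (hv0 t s)
        · have h1 : (0:ℝ) ≤ |wvec Ptr μ P d θ t s| * bnPol P θ s a :=
            mul_nonneg (abs_nonneg _) (hπ.1 s a)
          have h2 : (0:ℝ) ≤ visit Ptr (bnPol P θ) μ t s * (bnPol P θ s a * K) :=
            mul_nonneg (hv0 t s) (mul_nonneg (hπ.1 s a) hK0)
          linarith
    _ = ((∑ s, |wvec Ptr μ P d θ t s|) + K) * C := by
        have e : ∀ s, ∑ a, (|wvec Ptr μ P d θ t s| * bnPol P θ s a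
            + visit Ptr (bnPol P θ) μ t s * (bnPol P θ s a * K)) * C
            = (|wvec Ptr μ P d θ t s| + visit Ptr (bnPol P θ) μ t s * K) * C := by
          intro s
          rw [← Finset.sum_mul]
          congr 1
          rw [Finset.sum_add_distrib, ← Finset.mul_sum, hπ.2, mul_one]
          congr 1
          rw [← Finset.mul_sum, ← Finset.sum_mul, hπ.2, one_mul]
        rw [Finset.sum_congr rfl fun s _ => e s, ← Finset.sum_mul]
        congr 2
        rw [Finset.sum_add_distrib, ← Finset.sum_mul, hv1, one_mul]
    _ ≤ (t * K + K) * C := by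
        refine mul_le_mul_of_nonneg_right ?_ hC0
        linarith
lemma Zsum_le (Ptr : S → JointAct A → S → ℝ) (μ : S → ℝ) (P : Fin N → Finset (Fin N))
    (hDAG : IsDAG P) (hPtr : IsKernel Ptr) (hμ : IsDist μ) (Δ θ : Param S A P) (i : Fin N)
    (D : ℝ) (hD0 : 0 ≤ D)
    (hscΔ : ∀ s a, |score P Δ θ s a| ≤ 2 * D)
    (hΔi : ∀ s p b, |Δ i s p b| ≤ D) (t : ℕ) :
    ∑ s₀ : S, ∑ p₀ : ParAct A P i, ∑ a₀ : A i, ∑ s, ∑ a,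
      (|yvec Ptr μ P Δ i s₀ p₀ a₀ θ t s| * bnPol P θ s a
      + |wvec Ptr μ P (basis P i s₀ p₀ a₀) θ t s| * (bnPol P θ s a * (2*D))
      + (|wvec Ptr μ P Δ θ t s| * (bnPol P θ s a * |score P (basis P i s₀ p₀ a₀) θ s a|)
      + visit Ptr (bnPol P θ) μ t s *
          (bnPol P θ s a * (2*D) * |score P (basis P i s₀ p₀ a₀) θ s a|
            + bnPol P θ s a * |scoreD P Δ θ i s₀ p₀ a₀ s a|)))
      ≤ 4*D*(t:ℝ)^2 + 10*D*t + 6*D := by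
  have hπ := bnPol_isPol P hDAG θ
  have hv1 := visit_mass Ptr (bnPol P θ) μ hπ hPtr hμ
  have hv0 := visit_nonneg Ptr (bnPol P θ) μ hπ.1 hPtr.1 hμ.1
  have hwΔ := wvec_l1 Ptr μ P hDAG hPtr hμ Δ θ (2*D) hscΔ
  have hWt := wvec_l1_csum Ptr μ P hDAG hPtr hμ θ i
  have hY := yvec_l1_csum Ptr μ P hDAG hPtr hμ Δ θ i D hD0 hscΔ hΔi t
  simp only [Finset.sum_add_distrib]
  have hG1 : ∑ s₀ : S, ∑ p₀ : ParAct A P i, ∑ a₀ : A i, ∑ s, ∑ a,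
      |yvec Ptr μ P Δ i s₀ p₀ a₀ θ t s| * bnPol P θ s a
      = ∑ s₀ : S, ∑ p₀ : ParAct A P i, ∑ a₀ : A i,
          ∑ s, |yvec Ptr μ P Δ i s₀ p₀ a₀ θ t s| := by
    refine Finset.sum_congr rfl fun s₀ _ => Finset.sum_congr rfl fun p₀ _ =>
      Finset.sum_congr rfl fun a₀ _ => Finset.sum_congr rfl fun s _ => ?_
    rw [← Finset.mul_sum, hπ.2, mul_one]
  have hG2 : ∑ s₀ : S, ∑ p₀ : ParAct A P i, ∑ a₀ : A i, ∑ s, ∑ a,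
      |wvec Ptr μ P (basis P i s₀ p₀ a₀) θ t s| * (bnPol P θ s a * (2*D))
      ≤ (2*D) * (2*t) := by
    have e1 : ∀ s₀ p₀ a₀, ∑ s, ∑ a,
        |wvec Ptr μ P (basis P i s₀ p₀ a₀) θ t s| * (bnPol P θ s a * (2*D))
        = (∑ s, |wvec Ptr μ P (basis P i s₀ p₀ a₀) θ t s|) * (2*D) := by
      intro s₀ p₀ a₀
      rw [Finset.sum_mul]
      refine Finset.sum_congr rfl fun s _ => ?_
      rw [← Finset.mul_sum, ← Finset.sum_mul, hπ.2, one_mul]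
    simp only [e1, ← Finset.sum_mul]
    rw [mul_comm]
    exact mul_le_mul_of_nonneg_left (hWt t) (by linarith)
  have hG3 : ∑ s₀ : S, ∑ p₀ : ParAct A P i, ∑ a₀ : A i, ∑ s, ∑ a,
      |wvec Ptr μ P Δ θ t s| * (bnPol P θ s a * |score P (basis P i s₀ p₀ a₀) θ s a|)
      ≤ 2*(2*D*t) := by
    rw [sum_c_swap (fun s₀ p₀ a₀ s a => |wvec Ptr μ P Δ θ t s| *
      (bnPol P θ s a * |score P (basis P i s₀ p₀ a₀) θ s a|))]
    calc ∑ s, ∑ a, ∑ s₀ : S, ∑ p₀ : ParAct A P i, ∑ a₀ : A i,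
          |wvec Ptr μ P Δ θ t s| *
            (bnPol P θ s a * |score P (basis P i s₀ p₀ a₀) θ s a|)
        ≤ ∑ s, ∑ a, |wvec Ptr μ P Δ θ t s| * (bnPol P θ s a * 2) := by
          refine Finset.sum_le_sum fun s _ => Finset.sum_le_sum fun a _ => ?_
          simp only [← Finset.mul_sum]
          refine mul_le_mul_of_nonneg_left ?_ (abs_nonneg _)
          exact mul_le_mul_of_nonneg_left (sum_abs_score_basis_le P θ i s a) (hπ.1 s a)
      _ = (∑ s, |wvec Ptr μ P Δ θ t s|) * 2 := by
          rw [Finset.sum_mul]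
          refine Finset.sum_congr rfl fun s _ => ?_
          rw [← Finset.mul_sum, ← Finset.sum_mul, hπ.2, one_mul]
      _ ≤ 2*(2*D*t) := by nlinarith [hwΔ t]
  have hG4 : ∑ s₀ : S, ∑ p₀ : ParAct A P i, ∑ a₀ : A i, ∑ s, ∑ a,
      visit Ptr (bnPol P θ) μ t s *
        (bnPol P θ s a * (2*D) * |score P (basis P i s₀ p₀ a₀) θ s a|
          + bnPol P θ s a * |scoreD P Δ θ i s₀ p₀ a₀ s a|)
      ≤ 6*D := by
    rw [sum_c_swap (fun s₀ p₀ a₀ s a => visit Ptr (bnPol P θ) μ t s *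
      (bnPol P θ s a * (2*D) * |score P (basis P i s₀ p₀ a₀) θ s a|
        + bnPol P θ s a * |scoreD P Δ θ i s₀ p₀ a₀ s a|))]
    calc ∑ s, ∑ a, ∑ s₀ : S, ∑ p₀ : ParAct A P i, ∑ a₀ : A i,
          visit Ptr (bnPol P θ) μ t s *
            (bnPol P θ s a * (2*D) * |score P (basis P i s₀ p₀ a₀) θ s a|
              + bnPol P θ s a * |scoreD P Δ θ i s₀ p₀ a₀ s a|)
        ≤ ∑ s, ∑ a, visit Ptr (bnPol P θ) μ t s * (bnPol P θ s a * (6*D)) := by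
          refine Finset.sum_le_sum fun s _ => Finset.sum_le_sum fun a _ => ?_
          simp only [← Finset.mul_sum]
          refine mul_le_mul_of_nonneg_left ?_ (hv0 t s)
          simp only [Finset.sum_add_distrib]
          have h1 : ∑ s₀ : S, ∑ p₀ : ParAct A P i, ∑ a₀ : A i,
              bnPol P θ s a * (2*D) * |score P (basis P i s₀ p₀ a₀) θ s a|
              ≤ bnPol P θ s a * (2*D) * 2 := by
            simp only [← Finset.mul_sum]
            refine mul_le_mul_of_nonneg_left (sum_abs_score_basis_le P θ i s a) ?_
            have := hπ.1 s a; nlinarith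
          have h2 : ∑ s₀ : S, ∑ p₀ : ParAct A P i, ∑ a₀ : A i,
              bnPol P θ s a * |scoreD P Δ θ i s₀ p₀ a₀ s a|
              ≤ bnPol P θ s a * (2*D) := by
            simp only [← Finset.mul_sum]
            exact mul_le_mul_of_nonneg_left (sum_abs_scoreD_le P Δ θ i D hΔi s a) (hπ.1 s a)
          calc _ ≤ bnPol P θ s a * (2*D) * 2 + bnPol P θ s a * (2*D) := add_le_add h1 h2
            _ = bnPol P θ s a * (6*D) := by ring
      _ = 6*D := by
          have e : ∀ s, ∑ a, visit Ptr (bnPol P θ) μ t s * (bnPol P θ s a * (6*D))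
              = visit Ptr (bnPol P θ) μ t s * (6*D) := by
            intro s
            rw [← Finset.mul_sum, ← Finset.sum_mul, hπ.2, one_mul]
          rw [Finset.sum_congr rfl fun s _ => e s, ← Finset.sum_mul, hv1, one_mul]
  rw [hG1]
  have hcast : (0:ℝ) ≤ (t:ℝ) := Nat.cast_nonneg t
  nlinarith [hY, hG2, hG3, hG4]

lemma summand_abs_le (Ptr : S → JointAct A → S → ℝ) (μ : S → ℝ) (P : Fin N → Finset (Fin N))
    (hDAG : IsDAG P) (hPtr : IsKernel Ptr) (hμ : IsDist μ) (Δ θ : Param S A P) (i : Fin N)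
    (D : ℝ) (hscΔ : ∀ s a, |score P Δ θ s a| ≤ 2 * D) (t : ℕ) (s₀ : S)
    (p₀ : ParAct A P i) (a₀ : A i) (s : S) (a : JointAct A) :
    |(yvec Ptr μ P Δ i s₀ p₀ a₀ θ t s * bnPol P θ s a
        + wvec Ptr μ P (basis P i s₀ p₀ a₀) θ t s * (bnPol P θ s a * score P Δ θ s a))
      + (wvec Ptr μ P Δ θ t s * (bnPol P θ s a * score P (basis P i s₀ p₀ a₀) θ s a)
        + visit Ptr (bnPol P θ) μ t s *
            (bnPol P θ s a * score P Δ θ s a * score P (basis P i s₀ p₀ a₀) θ s a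
              + bnPol P θ s a * scoreD P Δ θ i s₀ p₀ a₀ s a))|
    ≤ |yvec Ptr μ P Δ i s₀ p₀ a₀ θ t s| * bnPol P θ s a
      + |wvec Ptr μ P (basis P i s₀ p₀ a₀) θ t s| * (bnPol P θ s a * (2*D))
      + (|wvec Ptr μ P Δ θ t s| * (bnPol P θ s a * |score P (basis P i s₀ p₀ a₀) θ s a|)
      + visit Ptr (bnPol P θ) μ t s *
          (bnPol P θ s a * (2*D) * |score P (basis P i s₀ p₀ a₀) θ s a|
            + bnPol P θ s a * |scoreD P Δ θ i s₀ p₀ a₀ s a|)) := by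
  have hπ := bnPol_isPol P hDAG θ
  have hv0 := visit_nonneg Ptr (bnPol P θ) μ hπ.1 hPtr.1 hμ.1
  have hπn := hπ.1 s a
  have hvn := hv0 t s
  refine (abs_add_le _ _).trans (add_le_add ?_ ?_)
  · refine (abs_add_le _ _).trans (add_le_add (le_of_eq ?_) ?_)
    · rw [abs_mul, abs_of_nonneg hπn]
    · rw [abs_mul]
      refine mul_le_mul_of_nonneg_left ?_ (abs_nonneg _)
      rw [abs_mul, abs_of_nonneg hπn]
      exact mul_le_mul_of_nonneg_left (hscΔ s a) hπn
  · refine (abs_add_le _ _).trans (add_le_add ?_ ?_)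
    · rw [abs_mul]
      refine mul_le_mul_of_nonneg_left (le_of_eq ?_) (abs_nonneg _)
      rw [abs_mul, abs_of_nonneg hπn]
    · rw [abs_mul, abs_of_nonneg hvn]
      refine mul_le_mul_of_nonneg_left ((abs_add_le _ _).trans (add_le_add ?_ ?_)) hvn
      · rw [abs_mul]
        refine mul_le_mul_of_nonneg_right ?_ (abs_nonneg _)
        rw [abs_mul, abs_of_nonneg hπn]
        exact mul_le_mul_of_nonneg_left (hscΔ s a) hπn
      · rw [abs_mul, abs_of_nonneg hπn]

lemma TderD_csum_le (Ptr : S → JointAct A → S → ℝ) (μ : S → ℝ) (P : Fin N → Finset (Fin N))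
    (hDAG : IsDAG P) (hPtr : IsKernel Ptr) (hμ : IsDist μ) (f : S → JointAct A → ℝ)
    (C : ℝ) (hC0 : 0 ≤ C) (hf : ∀ s a, |f s a| ≤ C) (Δ θ : Param S A P) (i : Fin N)
    (D : ℝ) (hD0 : 0 ≤ D)
    (hscΔ : ∀ s a, |score P Δ θ s a| ≤ 2 * D)
    (hΔi : ∀ s p b, |Δ i s p b| ≤ D) (t : ℕ) :
    ∑ s₀ : S, ∑ p₀ : ParAct A P i, ∑ a₀ : A i,
      |TderD Ptr μ P f Δ i s₀ p₀ a₀ θ t| ≤ (4*D*(t:ℝ)^2 + 10*D*t + 6*D) * C := by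
  have hpoint : ∀ s₀ p₀ a₀, |TderD Ptr μ P f Δ i s₀ p₀ a₀ θ t|
      ≤ (∑ s, ∑ a,
        (|yvec Ptr μ P Δ i s₀ p₀ a₀ θ t s| * bnPol P θ s a
        + |wvec Ptr μ P (basis P i s₀ p₀ a₀) θ t s| * (bnPol P θ s a * (2*D))
        + (|wvec Ptr μ P Δ θ t s| * (bnPol P θ s a * |score P (basis P i s₀ p₀ a₀) θ s a|)
        + visit Ptr (bnPol P θ) μ t s *
            (bnPol P θ s a * (2*D) * |score P (basis P i s₀ p₀ a₀) θ s a|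
              + bnPol P θ s a * |scoreD P Δ θ i s₀ p₀ a₀ s a|)))) * C := by
    intro s₀ p₀ a₀
    rw [Finset.sum_mul]
    refine (Finset.abs_sum_le_sum_abs _ _).trans (Finset.sum_le_sum fun s _ => ?_)
    rw [Finset.sum_mul]
    refine (Finset.abs_sum_le_sum_abs _ _).trans (Finset.sum_le_sum fun a _ => ?_)
    rw [abs_mul]
    calc _ ≤ |(yvec Ptr μ P Δ i s₀ p₀ a₀ θ t s * bnPol P θ s a
          + wvec Ptr μ P (basis P i s₀ p₀ a₀) θ t s * (bnPol P θ s a * score P Δ θ s a))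
        + (wvec Ptr μ P Δ θ t s * (bnPol P θ s a * score P (basis P i s₀ p₀ a₀) θ s a)
          + visit Ptr (bnPol P θ) μ t s *
              (bnPol P θ s a * score P Δ θ s a * score P (basis P i s₀ p₀ a₀) θ s a
                + bnPol P θ s a * scoreD P Δ θ i s₀ p₀ a₀ s a))| * C :=
          mul_le_mul_of_nonneg_left (hf s a) (abs_nonneg _)
      _ ≤ _ := mul_le_mul_of_nonneg_right
          (summand_abs_le Ptr μ P hDAG hPtr hμ Δ θ i D hscΔ t s₀ p₀ a₀ s a) hC0
  calc ∑ s₀ : S, ∑ p₀ : ParAct A P i, ∑ a₀ : A i, |TderD Ptr μ P f Δ i s₀ p₀ a₀ θ t|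
      ≤ ∑ s₀ : S, ∑ p₀ : ParAct A P i, ∑ a₀ : A i, (∑ s, ∑ a,
        (|yvec Ptr μ P Δ i s₀ p₀ a₀ θ t s| * bnPol P θ s a
        + |wvec Ptr μ P (basis P i s₀ p₀ a₀) θ t s| * (bnPol P θ s a * (2*D))
        + (|wvec Ptr μ P Δ θ t s| * (bnPol P θ s a * |score P (basis P i s₀ p₀ a₀) θ s a|)
        + visit Ptr (bnPol P θ) μ t s *
            (bnPol P θ s a * (2*D) * |score P (basis P i s₀ p₀ a₀) θ s a|
              + bnPol P θ s a * |scoreD P Δ θ i s₀ p₀ a₀ s a|)))) * C :=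
        Finset.sum_le_sum fun s₀ _ => Finset.sum_le_sum fun p₀ _ =>
          Finset.sum_le_sum fun a₀ _ => hpoint s₀ p₀ a₀
    _ ≤ (4*D*(t:ℝ)^2 + 10*D*t + 6*D) * C := by
        simp only [← Finset.sum_mul]
        exact mul_le_mul_of_nonneg_right
          (Zsum_le Ptr μ P hDAG hPtr hμ Δ θ i D hD0 hscΔ hΔi t) hC0
lemma score_basis_abs_le (P : Fin N → Finset (Fin N)) (θ : Param S A P) (i : Fin N)
    (s₀ : S) (p₀ : ParAct A P i) (a₀ : A i) (s : S) (a : JointAct A) :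
    |score P (basis P i s₀ p₀ a₀) θ s a| ≤ 2 := by
  rw [score_basis]
  split
  · have h1 : |if a i = a₀ then (1:ℝ) else 0| ≤ 1 := by split <;> simp
    have h2 : |locPol P θ i s p₀ a₀| ≤ 1 := by
      rw [abs_of_pos (locPol_pos P θ i s p₀ a₀)]
      exact locPol_le_one P θ i s p₀ a₀
    calc |_ - _| ≤ _ + _ := abs_sub _ _
      _ ≤ 1 + 1 := add_le_add h1 h2
      _ = 2 := by norm_num
  · simp

lemma geom_family (γ : ℝ) (hγ0 : 0 ≤ γ) (hγ1 : γ < 1) :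
    (Summable fun t : ℕ => γ ^ t) ∧ (Summable fun t : ℕ => (t:ℝ) * γ ^ t)
      ∧ (Summable fun t : ℕ => (t:ℝ)^2 * γ ^ t) := by
  have hn : ‖γ‖ < 1 := by rwa [Real.norm_eq_abs, abs_of_nonneg hγ0]
  refine ⟨summable_geometric_of_lt_one hγ0 hγ1, ?_, ?_⟩
  · simpa using summable_pow_mul_geometric_of_norm_lt_one 1 hn
  · exact summable_pow_mul_geometric_of_norm_lt_one 2 hn

lemma tsum_tt1_geometric (γ : ℝ) (hγ0 : 0 ≤ γ) (hγ1 : γ < 1) :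
    ∑' t : ℕ, (t:ℝ) * ((t:ℝ)+1) * γ ^ t = 2*γ/(1-γ)^3 := by
  obtain ⟨hs0, hs1, hs2⟩ := geom_family γ hγ0 hγ1
  have hn : ‖γ‖ < 1 := by rwa [Real.norm_eq_abs, abs_of_nonneg hγ0]
  have hS : Summable (fun t : ℕ => (t:ℝ) * ((t:ℝ)+1) * γ ^ t) := by
    have he : (fun t : ℕ => (t:ℝ) * ((t:ℝ)+1) * γ ^ t)
        = fun t : ℕ => (t:ℝ)^2*γ^t + (t:ℝ)*γ^t := by funext t; ring
    rw [he]; exact hs2.add hs1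
  have hf : Summable (fun t : ℕ => ((t:ℝ)-1) * (t:ℝ) * γ ^ t) := by
    have he : (fun t : ℕ => ((t:ℝ)-1) * (t:ℝ) * γ ^ t)
        = fun t : ℕ => (t:ℝ)^2*γ^t - (t:ℝ)*γ^t := by funext t; ring
    rw [he]; exact hs2.sub hs1
  set S := ∑' t : ℕ, (t:ℝ) * ((t:ℝ)+1) * γ ^ t with hSdef
  have hshift : γ * S = ∑' t : ℕ, ((t:ℝ)-1) * (t:ℝ) * γ ^ t := by
    rw [hSdef, ← tsum_mul_left]
    have h0 := Summable.tsum_eq_zero_add hf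
    simp only [Nat.cast_zero] at h0
    rw [h0]
    have : ∀ t : ℕ, γ * ((t:ℝ) * ((t:ℝ)+1) * γ ^ t)
        = (((t+1:ℕ):ℝ)-1) * ((t+1:ℕ):ℝ) * γ ^ (t+1) := by
      intro t; push_cast; ring
    rw [tsum_congr this]
    norm_num
  have hsub : S - γ * S = 2 * (γ/(1-γ)^2) := by
    rw [hshift, hSdef, ← Summable.tsum_sub hS hf]
    have : ∀ t : ℕ, (t:ℝ) * ((t:ℝ)+1) * γ ^ t - ((t:ℝ)-1) * (t:ℝ) * γ ^ t
        = 2 * ((t:ℝ) * γ ^ t) := by intro t; ring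
    rw [tsum_congr this, tsum_mul_left, tsum_coe_mul_geometric_of_norm_lt_one hn]
  have hne : (1:ℝ) - γ ≠ 0 := ne_of_gt (by linarith)
  have hfin : S * (1-γ)^3 = 2*γ := by
    have h1 : S * (1-γ) = 2 * (γ/(1-γ)^2) := by linarith [hsub, (by ring : S - γ*S = S*(1-γ))]
    calc S * (1-γ)^3 = (S * (1-γ)) * (1-γ)^2 := by ring
      _ = 2 * (γ/(1-γ)^2) * (1-γ)^2 := by rw [h1]
      _ = 2 * γ := by field_simp
  rw [eq_div_iff (pow_ne_zero 3 hne)]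
  exact hfin
lemma gradV_eq (γ : ℝ) (hγ0 : 0 ≤ γ) (hγ1 : γ < 1) (Ptr : S → JointAct A → S → ℝ)
    (hPtr : IsKernel Ptr) (r : S → JointAct A → ℝ) (rmin rmax : ℝ)
    (hr : ∀ s a, rmin ≤ r s a ∧ r s a ≤ rmax) (μ : S → ℝ) (hμ : IsDist μ)
    (P : Fin N → Finset (Fin N)) (hDAG : IsDAG P) (ϑ : Param S A P) (i : Fin N)
    (s₀ : S) (p₀ : ParAct A P i) (a₀ : A i) :
    gradV γ Ptr r μ P ϑ i s₀ p₀ a₀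
      = ∑' t : ℕ, γ ^ t *
          Tder Ptr μ P (fun s a => r s a - (rmin+rmax)/2) (basis P i s₀ p₀ a₀) ϑ t := by
  haveI : Nonempty (JointAct A) := ⟨fun j => Classical.arbitrary _⟩
  obtain ⟨hs0, hs1, hs2⟩ := geom_family γ hγ0 hγ1
  set e := basis P i s₀ p₀ a₀ with he
  set f : S → JointAct A → ℝ := fun s a => r s a - (rmin+rmax)/2 with hfdef
  set C : ℝ := (rmax - rmin)/2 with hCdef
  set mid : ℝ := (rmin+rmax)/2 with hmid
  have hf : ∀ s a, |f s a| ≤ C := by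
    intro s a
    rw [abs_le]
    constructor <;> [skip; skip] <;>
      · have := (hr s a).1; have := (hr s a).2
        simp only [hfdef, hCdef]; linarith
  have hC0 : 0 ≤ C := by
    have h := hr (Classical.arbitrary S) (Classical.arbitrary (JointAct A))
    simp only [hCdef]; linarith [h.1, h.2]
  have hsc : ∀ (θ' : Param S A P) s a, |score P e θ' s a| ≤ 2 :=
    fun θ' s a => score_basis_abs_le P θ' i s₀ p₀ a₀ s a
  have hu : Summable (fun t : ℕ => γ^t * (((t:ℝ) * 2 + 2) * C)) := by
    have he2 : (fun t : ℕ => γ^t * (((t:ℝ) * 2 + 2) * C))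
        = fun t : ℕ => (2*C) * ((t:ℝ)*γ^t) + (2*C) * γ^t := by funext t; ring
    rw [he2]
    exact (hs1.mul_left _).add (hs0.mul_left _)
  have hsumT : ∀ (ϑ' : Param S A P), Summable (fun t : ℕ => γ^t * Tterm Ptr μ P f ϑ' t) := by
    intro ϑ'
    refine Summable.of_norm_bounded (g := fun t => γ^t * C) (hs0.mul_right C) fun t => ?_
    rw [Real.norm_eq_abs, abs_mul, abs_pow, abs_of_nonneg hγ0]
    exact mul_le_mul_of_nonneg_left
      (Tterm_abs_le Ptr μ P hDAG hPtr hμ f C hf ϑ' t) (pow_nonneg hγ0 t)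
  have hg : ∀ (t : ℕ) (τ : ℝ), HasDerivAt (fun τ : ℝ => γ^t * Tterm Ptr μ P f (ϑ + τ • e) t)
      (γ^t * Tder Ptr μ P f e (ϑ + τ • e) t) τ :=
    fun t τ => (hasDerivAt_Tterm Ptr μ P f ϑ e t τ).const_mul _
  have hg' : ∀ (t : ℕ) (τ : ℝ), ‖γ^t * Tder Ptr μ P f e (ϑ + τ • e) t‖
      ≤ γ^t * (((t:ℝ) * 2 + 2) * C) := by
    intro t τ
    rw [Real.norm_eq_abs, abs_mul, abs_pow, abs_of_nonneg hγ0]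
    exact mul_le_mul_of_nonneg_left
      (Tder_abs_le Ptr μ P hDAG hPtr hμ f C hC0 hf e (ϑ + τ • e) 2 (hsc _) t)
      (pow_nonneg hγ0 t)
  have hF := hasDerivAt_tsum hu hg hg' (hsumT (ϑ + (0:ℝ) • e)) 0
  have hVval : ∀ τ : ℝ, Vval γ Ptr r (bnPol P (ϑ + τ • e)) μ
      = (∑' t : ℕ, γ^t * Tterm Ptr μ P f (ϑ + τ • e) t) + (∑' t : ℕ, γ^t) * mid := by
    intro τ
    set η := ϑ + τ • e with hη
    have hπ := bnPol_isPol P hDAG η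
    have hv1 := visit_mass Ptr (bnPol P η) μ hπ hPtr hμ
    have hterm : ∀ t, ∑ s, ∑ a, visit Ptr (bnPol P η) μ t s * bnPol P η s a * r s a
        = Tterm Ptr μ P f η t + mid := by
      intro t
      have e1 : ∀ s (a : JointAct A), visit Ptr (bnPol P η) μ t s * bnPol P η s a * r s a
          = visit Ptr (bnPol P η) μ t s * bnPol P η s a * f s a
            + visit Ptr (bnPol P η) μ t s * bnPol P η s a * mid := by
        intro s a; simp only [hfdef, hmid]; ring
      calc ∑ s, ∑ a, visit Ptr (bnPol P η) μ t s * bnPol P η s a * r s a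
          = ∑ s, ∑ a, (visit Ptr (bnPol P η) μ t s * bnPol P η s a * f s a
            + visit Ptr (bnPol P η) μ t s * bnPol P η s a * mid) := by
            exact Finset.sum_congr rfl fun s _ => Finset.sum_congr rfl fun a _ => e1 s a
        _ = Tterm Ptr μ P f η t
            + ∑ s, ∑ a, visit Ptr (bnPol P η) μ t s * bnPol P η s a * mid := by
            simp only [Finset.sum_add_distrib]; rfl
        _ = Tterm Ptr μ P f η t + mid := by
            congr 1
            have e2 : ∀ s, ∑ a, visit Ptr (bnPol P η) μ t s * bnPol P η s a * mid
                = visit Ptr (bnPol P η) μ t s * mid := by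
              intro s
              rw [← Finset.sum_mul, ← Finset.mul_sum, hπ.2, mul_one]
            rw [Finset.sum_congr rfl fun s _ => e2 s, ← Finset.sum_mul, hv1, one_mul]
    show (∑' t : ℕ, γ ^ t * ∑ s, ∑ a,
        visit Ptr (bnPol P η) μ t s * bnPol P η s a * r s a) = _
    rw [tsum_congr (fun t => by rw [hterm t, mul_add])]
    rw [Summable.tsum_add (hsumT η) (hs0.mul_right mid), tsum_mul_right]
  have hfun : (fun τ : ℝ => Vval γ Ptr r (bnPol P (ϑ + τ • e)) μ)
      = (fun τ : ℝ => (∑' t : ℕ, γ^t * Tterm Ptr μ P f (ϑ + τ • e) t)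
          + (∑' t : ℕ, γ^t) * mid) := funext hVval
  have hzero : ϑ + (0:ℝ) • e = ϑ := by simp
  have hD : HasDerivAt (fun τ : ℝ => Vval γ Ptr r (bnPol P (ϑ + τ • e)) μ)
      (∑' t : ℕ, γ^t * Tder Ptr μ P f e ϑ t) 0 := by
    rw [hfun]
    have := hF.add_const ((∑' t : ℕ, γ^t) * mid)
    rwa [hzero] at this
  show deriv (fun τ : ℝ => Vval γ Ptr r (bnPol P (ϑ + τ • e)) μ) 0 = _
  rw [hD.deriv]
end Aux2
/-- ℓ1 bound on the difference of the per-agent BN policy gradients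
(Lemma A.2). -/
theorem grad_diff_l1_bound
    (P : Fin N → Finset (Fin N)) (hDAG : IsDAG P)
    (γ : ℝ) (hγ0 : 0 ≤ γ) (hγ1 : γ < 1)
    (Ptr : S → JointAct A → S → ℝ) (hPtr : IsKernel Ptr)
    (r : S → JointAct A → ℝ) (rmin rmax : ℝ)
    (hr : ∀ s a, rmin ≤ r s a ∧ r s a ≤ rmax)
    (μ : S → ℝ) (hμ : IsDist μ)
    (θt θ : Param S A P) (i : Fin N) :
    (∑ s : S, ∑ p : ParAct A P i, ∑ ai : A i,
        |gradV γ Ptr r μ P θt i s p ai - gradV γ Ptr r μ P θ i s p ai|) ≤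
      (8 * (rmax - rmin) / (1 - γ) ^ 3) *
        ∑ j : Fin N, Real.sqrt (∑ s : S, ∑ p : ParAct A P j, ∑ aj : A j,
          (θt j s p aj - θ j s p aj) ^ 2) := by
  haveI : Nonempty (JointAct A) := ⟨fun j => Classical.arbitrary _⟩
  obtain ⟨hs0, hs1, hs2⟩ := geom_family γ hγ0 hγ1
  have h1γ : 0 < 1 - γ := by linarith
  set f : S → JointAct A → ℝ := fun s a => r s a - (rmin+rmax)/2 with hfdef
  set C : ℝ := (rmax - rmin)/2 with hCdef
  have hf : ∀ s a, |f s a| ≤ C := by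
    intro s a
    rw [abs_le]
    refine ⟨?_, ?_⟩ <;>
      · have h1 := (hr s a).1; have h2 := (hr s a).2
        simp only [hfdef, hCdef]; linarith
  have hC0 : 0 ≤ C := by
    have h := hr (Classical.arbitrary S) (Classical.arbitrary (JointAct A))
    simp only [hCdef]; linarith [h.1, h.2]
  set Δ : Param S A P := θt - θ with hΔdef
  set B : Fin N → ℝ := fun j => Real.sqrt (∑ s : S, ∑ p : ParAct A P j, ∑ aj : A j,
    (θt j s p aj - θ j s p aj) ^ 2) with hBdef
  set D : ℝ := ∑ j : Fin N, Real.sqrt (∑ s : S, ∑ p : ParAct A P j, ∑ aj : A j,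
    (θt j s p aj - θ j s p aj) ^ 2) with hDdef
  have hDsum : ∑ j, B j = D := rfl
  have hB0 : ∀ j, 0 ≤ B j := fun j => Real.sqrt_nonneg _
  have hD0 : 0 ≤ D := by rw [← hDsum]; exact Finset.sum_nonneg fun j _ => hB0 j
  have hB : ∀ j s p b, |Δ j s p b| ≤ B j := by
    intro j s p b
    have hx : Δ j s p b = θt j s p b - θ j s p b := rfl
    rw [hx, ← Real.sqrt_sq_eq_abs]
    refine Real.sqrt_le_sqrt ?_
    calc (θt j s p b - θ j s p b)^2
        ≤ ∑ b', (θt j s p b' - θ j s p b')^2 :=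
          Finset.single_le_sum (f := fun b' => (θt j s p b' - θ j s p b')^2)
            (fun _ _ => sq_nonneg _) (Finset.mem_univ b)
      _ ≤ ∑ p', ∑ b', (θt j s p' b' - θ j s p' b')^2 :=
          Finset.single_le_sum (f := fun p' => ∑ b', (θt j s p' b' - θ j s p' b')^2)
            (fun p' _ => Finset.sum_nonneg fun _ _ => sq_nonneg _) (Finset.mem_univ p)
      _ ≤ ∑ s', ∑ p', ∑ b', (θt j s' p' b' - θ j s' p' b')^2 :=
          Finset.single_le_sum (f := fun s' => ∑ p', ∑ b', (θt j s' p' b' - θ j s' p' b')^2)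
            (fun s' _ => Finset.sum_nonneg fun _ _ => Finset.sum_nonneg fun _ _ => sq_nonneg _)
            (Finset.mem_univ s)
  have hΔi : ∀ s p b, |Δ i s p b| ≤ D := fun s p b =>
    (hB i s p b).trans (hDsum ▸ Finset.single_le_sum (fun j _ => hB0 j) (Finset.mem_univ i))
  have hscΔ : ∀ (θ' : Param S A P) s a, |score P Δ θ' s a| ≤ 2 * D := by
    intro θ' s a
    have := score_abs_le P Δ θ' s a B hB
    rwa [hDsum] at this
  have hsc : ∀ (θ' : Param S A P) (s₀ : S) (p₀ : ParAct A P i) (a₀ : A i),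
      ∀ s a, |score P (basis P i s₀ p₀ a₀) θ' s a| ≤ 2 :=
    fun θ' s₀ p₀ a₀ s a => score_basis_abs_le P θ' i s₀ p₀ a₀ s a
  have hsumD : ∀ (ϑ : Param S A P) (s₀ : S) (p₀ : ParAct A P i) (a₀ : A i),
      Summable (fun t : ℕ => γ^t * Tder Ptr μ P f (basis P i s₀ p₀ a₀) ϑ t) := by
    intro ϑ s₀ p₀ a₀
    refine Summable.of_norm_bounded (g := fun t => γ^t * (((t:ℝ)*2+2)*C)) ?_ fun t => ?_
    · have he2 : (fun t : ℕ => γ^t * (((t:ℝ) * 2 + 2) * C))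
          = fun t : ℕ => (2*C) * ((t:ℝ)*γ^t) + (2*C) * γ^t := by funext t; ring
      rw [he2]; exact (hs1.mul_left _).add (hs0.mul_left _)
    · rw [Real.norm_eq_abs, abs_mul, abs_pow, abs_of_nonneg hγ0]
      exact mul_le_mul_of_nonneg_left
        (Tder_abs_le Ptr μ P hDAG hPtr hμ f C hC0 hf _ ϑ 2 (hsc ϑ s₀ p₀ a₀) t)
        (pow_nonneg hγ0 t)
  -- the per-`t` c-summed difference bound, via the mean value inequality
  have hdiff : ∀ t : ℕ, ∑ s₀ : S, ∑ p₀ : ParAct A P i, ∑ a₀ : A i,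
      |Tder Ptr μ P f (basis P i s₀ p₀ a₀) θt t - Tder Ptr μ P f (basis P i s₀ p₀ a₀) θ t|
      ≤ (4*D*(t:ℝ)^2 + 10*D*t + 6*D) * C := by
    intro t
    set σ : S → ParAct A P i → A i → ℝ := fun s₀ p₀ a₀ =>
      if 0 ≤ Tder Ptr μ P f (basis P i s₀ p₀ a₀) θt t
          - Tder Ptr μ P f (basis P i s₀ p₀ a₀) θ t then 1 else -1 with hσdef
    have hσabs : ∀ s₀ p₀ a₀, |σ s₀ p₀ a₀| = 1 := by
      intro s₀ p₀ a₀; simp only [hσdef]; split <;> simp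
    have hσmul : ∀ s₀ p₀ a₀, σ s₀ p₀ a₀ *
        (Tder Ptr μ P f (basis P i s₀ p₀ a₀) θt t - Tder Ptr μ P f (basis P i s₀ p₀ a₀) θ t)
        = |Tder Ptr μ P f (basis P i s₀ p₀ a₀) θt t
            - Tder Ptr μ P f (basis P i s₀ p₀ a₀) θ t| := by
      intro s₀ p₀ a₀
      simp only [hσdef]
      split
      · rw [one_mul, abs_of_nonneg ‹_›]
      · rw [neg_one_mul, abs_of_neg (not_le.1 ‹_›)]
    set Φ : ℝ → ℝ := fun u => ∑ s₀ : S, ∑ p₀ : ParAct A P i, ∑ a₀ : A i,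
      σ s₀ p₀ a₀ * Tder Ptr μ P f (basis P i s₀ p₀ a₀) (θ + u • Δ) t with hΦdef
    set Φ' : ℝ → ℝ := fun u => ∑ s₀ : S, ∑ p₀ : ParAct A P i, ∑ a₀ : A i,
      σ s₀ p₀ a₀ * TderD Ptr μ P f Δ i s₀ p₀ a₀ (θ + u • Δ) t with hΦ'def
    have hΦd : ∀ u : ℝ, HasDerivAt Φ (Φ' u) u := by
      intro u
      refine HasDerivAt.fun_sum fun s₀ _ => HasDerivAt.fun_sum fun p₀ _ =>
        HasDerivAt.fun_sum fun a₀ _ => ?_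
      exact (hasDerivAt_Tder Ptr μ P f θ Δ i s₀ p₀ a₀ t u).const_mul _
    have hΦb : ∀ u : ℝ, ‖Φ' u‖ ≤ (4*D*(t:ℝ)^2 + 10*D*t + 6*D) * C := by
      intro u
      rw [Real.norm_eq_abs]
      calc |Φ' u| ≤ ∑ s₀ : S, ∑ p₀ : ParAct A P i, ∑ a₀ : A i,
            |TderD Ptr μ P f Δ i s₀ p₀ a₀ (θ + u • Δ) t| := by
            refine (Finset.abs_sum_le_sum_abs _ _).trans (Finset.sum_le_sum fun s₀ _ => ?_)
            refine (Finset.abs_sum_le_sum_abs _ _).trans (Finset.sum_le_sum fun p₀ _ => ?_)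
            refine (Finset.abs_sum_le_sum_abs _ _).trans (Finset.sum_le_sum fun a₀ _ => ?_)
            rw [abs_mul, hσabs, one_mul]
        _ ≤ _ := TderD_csum_le Ptr μ P hDAG hPtr hμ f C hC0 hf Δ (θ + u • Δ) i D hD0
            (hscΔ _) hΔi t
    have hmvt := norm_image_sub_le_of_norm_deriv_le_segment' (a := 0) (b := 1)
      (f := Φ) (f' := Φ') (C := (4*D*(t:ℝ)^2 + 10*D*t + 6*D) * C)
      (fun x _ => (hΦd x).hasDerivWithinAt) (fun x _ => hΦb x) 1
      (Set.right_mem_Icc.2 zero_le_one)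
    have hθ1 : θ + (1:ℝ) • Δ = θt := by rw [one_smul, hΔdef]; abel
    have hθ0 : θ + (0:ℝ) • Δ = θ := by simp
    calc ∑ s₀ : S, ∑ p₀ : ParAct A P i, ∑ a₀ : A i,
          |Tder Ptr μ P f (basis P i s₀ p₀ a₀) θt t
            - Tder Ptr μ P f (basis P i s₀ p₀ a₀) θ t|
        = Φ 1 - Φ 0 := by
          simp only [hΦdef, hθ1, hθ0]
          rw [← Finset.sum_sub_distrib]
          refine Finset.sum_congr rfl fun s₀ _ => ?_
          rw [← Finset.sum_sub_distrib]
          refine Finset.sum_congr rfl fun p₀ _ => ?_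
          rw [← Finset.sum_sub_distrib]
          refine Finset.sum_congr rfl fun a₀ _ => ?_
          rw [← mul_sub, hσmul]
      _ ≤ |Φ 1 - Φ 0| := le_abs_self _
      _ ≤ (4*D*(t:ℝ)^2 + 10*D*t + 6*D) * C * (1 - 0) := by
          rw [← Real.norm_eq_abs]; exact hmvt
      _ = (4*D*(t:ℝ)^2 + 10*D*t + 6*D) * C := by ring
  -- rewrite the gradients as series and assemble
  have hgrad : ∀ (ϑ : Param S A P) (s₀ : S) (p₀ : ParAct A P i) (a₀ : A i),
      gradV γ Ptr r μ P ϑ i s₀ p₀ a₀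
        = ∑' t : ℕ, γ^t * Tder Ptr μ P f (basis P i s₀ p₀ a₀) ϑ t :=
    fun ϑ s₀ p₀ a₀ => gradV_eq γ hγ0 hγ1 Ptr hPtr r rmin rmax hr μ hμ P hDAG ϑ i s₀ p₀ a₀
  have hG : ∀ (s₀ : S) (p₀ : ParAct A P i) (a₀ : A i),
      Summable (fun t : ℕ => |γ^t * Tder Ptr μ P f (basis P i s₀ p₀ a₀) θt t
        - γ^t * Tder Ptr μ P f (basis P i s₀ p₀ a₀) θ t|) :=
    fun s₀ p₀ a₀ => ((hsumD θt s₀ p₀ a₀).sub (hsumD θ s₀ p₀ a₀)).abs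
  have step1 : ∑ s : S, ∑ p : ParAct A P i, ∑ ai : A i,
      |gradV γ Ptr r μ P θt i s p ai - gradV γ Ptr r μ P θ i s p ai|
      ≤ ∑ s₀ : S, ∑ p₀ : ParAct A P i, ∑ a₀ : A i, ∑' t : ℕ,
          |γ^t * Tder Ptr μ P f (basis P i s₀ p₀ a₀) θt t
            - γ^t * Tder Ptr μ P f (basis P i s₀ p₀ a₀) θ t| := by
    refine Finset.sum_le_sum fun s₀ _ => Finset.sum_le_sum fun p₀ _ =>
      Finset.sum_le_sum fun a₀ _ => ?_
    rw [hgrad θt s₀ p₀ a₀, hgrad θ s₀ p₀ a₀,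
      ← Summable.tsum_sub (hsumD θt s₀ p₀ a₀) (hsumD θ s₀ p₀ a₀)]
    have := norm_tsum_le_tsum_norm (f := fun t : ℕ =>
      γ^t * Tder Ptr μ P f (basis P i s₀ p₀ a₀) θt t
        - γ^t * Tder Ptr μ P f (basis P i s₀ p₀ a₀) θ t)
      (by simpa [Real.norm_eq_abs] using hG s₀ p₀ a₀)
    simpa [Real.norm_eq_abs] using this
  have step2 : ∑ s₀ : S, ∑ p₀ : ParAct A P i, ∑ a₀ : A i, ∑' t : ℕ,
      |γ^t * Tder Ptr μ P f (basis P i s₀ p₀ a₀) θt t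
        - γ^t * Tder Ptr μ P f (basis P i s₀ p₀ a₀) θ t|
      = ∑' t : ℕ, ∑ s₀ : S, ∑ p₀ : ParAct A P i, ∑ a₀ : A i,
          |γ^t * Tder Ptr μ P f (basis P i s₀ p₀ a₀) θt t
            - γ^t * Tder Ptr μ P f (basis P i s₀ p₀ a₀) θ t| := by
    calc ∑ s₀ : S, ∑ p₀ : ParAct A P i, ∑ a₀ : A i, ∑' t : ℕ,
          |γ^t * Tder Ptr μ P f (basis P i s₀ p₀ a₀) θt t
            - γ^t * Tder Ptr μ P f (basis P i s₀ p₀ a₀) θ t|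
        = ∑ s₀ : S, ∑ p₀ : ParAct A P i, ∑' t : ℕ, ∑ a₀ : A i,
            |γ^t * Tder Ptr μ P f (basis P i s₀ p₀ a₀) θt t
              - γ^t * Tder Ptr μ P f (basis P i s₀ p₀ a₀) θ t| := by
          refine Finset.sum_congr rfl fun s₀ _ => Finset.sum_congr rfl fun p₀ _ => ?_
          exact (Summable.tsum_finsetSum (fun a₀ _ => hG s₀ p₀ a₀)).symm
      _ = ∑ s₀ : S, ∑' t : ℕ, ∑ p₀ : ParAct A P i, ∑ a₀ : A i,
            |γ^t * Tder Ptr μ P f (basis P i s₀ p₀ a₀) θt t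
              - γ^t * Tder Ptr μ P f (basis P i s₀ p₀ a₀) θ t| := by
          refine Finset.sum_congr rfl fun s₀ _ => ?_
          exact (Summable.tsum_finsetSum (fun p₀ _ => summable_sum (fun a₀ _ => hG s₀ p₀ a₀))).symm
      _ = _ := (Summable.tsum_finsetSum (fun s₀ _ => summable_sum (fun p₀ _ =>
          summable_sum (fun a₀ _ => hG s₀ p₀ a₀)))).symm
  have hn : ‖γ‖ < 1 := by rwa [Real.norm_eq_abs, abs_of_nonneg hγ0]
  have hpt : ∀ t : ℕ, ∑ s₀ : S, ∑ p₀ : ParAct A P i, ∑ a₀ : A i,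
      |γ^t * Tder Ptr μ P f (basis P i s₀ p₀ a₀) θt t
        - γ^t * Tder Ptr μ P f (basis P i s₀ p₀ a₀) θ t|
      ≤ γ^t * ((4*D*(t:ℝ)^2 + 10*D*t + 6*D) * C) := by
    intro t
    have e : ∀ (s₀ : S) (p₀ : ParAct A P i) (a₀ : A i),
        |γ^t * Tder Ptr μ P f (basis P i s₀ p₀ a₀) θt t
          - γ^t * Tder Ptr μ P f (basis P i s₀ p₀ a₀) θ t|
        = γ^t * |Tder Ptr μ P f (basis P i s₀ p₀ a₀) θt t
            - Tder Ptr μ P f (basis P i s₀ p₀ a₀) θ t| := by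
      intro s₀ p₀ a₀
      rw [← mul_sub, abs_mul, abs_pow, abs_of_nonneg hγ0]
    calc ∑ s₀ : S, ∑ p₀ : ParAct A P i, ∑ a₀ : A i,
          |γ^t * Tder Ptr μ P f (basis P i s₀ p₀ a₀) θt t
            - γ^t * Tder Ptr μ P f (basis P i s₀ p₀ a₀) θ t|
        = γ^t * ∑ s₀ : S, ∑ p₀ : ParAct A P i, ∑ a₀ : A i,
            |Tder Ptr μ P f (basis P i s₀ p₀ a₀) θt t
              - Tder Ptr μ P f (basis P i s₀ p₀ a₀) θ t| := by
          simp only [e, ← Finset.mul_sum]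
      _ ≤ _ := mul_le_mul_of_nonneg_left (hdiff t) (pow_nonneg hγ0 t)
  have hmaj : Summable (fun t : ℕ => γ^t * ((4*D*(t:ℝ)^2 + 10*D*t + 6*D) * C)) := by
    have he2 : (fun t : ℕ => γ^t * ((4*D*(t:ℝ)^2 + 10*D*t + 6*D) * C))
        = fun t : ℕ => (4*D*C) * ((t:ℝ)^2*γ^t)
            + ((10*D*C) * ((t:ℝ)*γ^t) + (6*D*C)*γ^t) := by funext t; ring
    rw [he2]
    exact (hs2.mul_left _).add ((hs1.mul_left _).add (hs0.mul_left _))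
  have hLsum : Summable (fun t : ℕ => ∑ s₀ : S, ∑ p₀ : ParAct A P i, ∑ a₀ : A i,
      |γ^t * Tder Ptr μ P f (basis P i s₀ p₀ a₀) θt t
        - γ^t * Tder Ptr μ P f (basis P i s₀ p₀ a₀) θ t|) :=
    summable_sum (fun s₀ _ => summable_sum (fun p₀ _ =>
      summable_sum (fun a₀ _ => hG s₀ p₀ a₀)))
  have step3 := Summable.tsum_le_tsum hpt hLsum hmaj
  have hS12 : Summable (fun t : ℕ => (t:ℝ)*((t:ℝ)+1)*γ^t) := by
    have he : (fun t : ℕ => (t:ℝ)*((t:ℝ)+1)*γ^t)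
        = fun t : ℕ => (t:ℝ)^2*γ^t + (t:ℝ)*γ^t := by funext t; ring
    rw [he]; exact hs2.add hs1
  have hval : ∑' t : ℕ, γ^t * ((4*D*(t:ℝ)^2 + 10*D*t + 6*D) * C)
      = (4*D*C) * (2*γ/(1-γ)^3) + ((6*D*C) * (γ/(1-γ)^2) + (6*D*C) * (1-γ)⁻¹) := by
    have he2 : (fun t : ℕ => γ^t * ((4*D*(t:ℝ)^2 + 10*D*t + 6*D) * C))
        = fun t : ℕ => (4*D*C) * ((t:ℝ)*((t:ℝ)+1)*γ^t)
            + ((6*D*C) * ((t:ℝ)*γ^t) + (6*D*C)*γ^t) := by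
      funext t; ring
    rw [he2, Summable.tsum_add (hS12.mul_left _) ((hs1.mul_left _).add (hs0.mul_left _)),
      Summable.tsum_add (hs1.mul_left _) (hs0.mul_left _), tsum_mul_left, tsum_mul_left, tsum_mul_left,
      tsum_tt1_geometric γ hγ0 hγ1, tsum_geometric_of_lt_one hγ0 hγ1]
    have := tsum_coe_mul_geometric_of_norm_lt_one (𝕜 := ℝ) hn
    rw [this]
  have hfinal : (4*D*C) * (2*γ/(1-γ)^3) + ((6*D*C) * (γ/(1-γ)^2) + (6*D*C) * (1-γ)⁻¹)
      ≤ 8 * (rmax - rmin) / (1-γ)^3 * D := by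
    have h2C : rmax - rmin = 2*C := by rw [hCdef]; ring
    rw [h2C]
    have e : (4*D*C) * (2*γ/(1-γ)^3) + ((6*D*C) * (γ/(1-γ)^2) + (6*D*C) * (1-γ)⁻¹)
        = (D*C*(8*γ + 6*γ*(1-γ) + 6*(1-γ)^2)) / (1-γ)^3 := by
      field_simp
      ring
    have e2 : 8 * (2*C) / (1-γ)^3 * D = (D*C*16) / (1-γ)^3 := by
      field_simp; ring
    rw [e, e2, div_le_div_iff_of_pos_right (by positivity)]
    nlinarith [mul_nonneg hD0 hC0, hγ0, hγ1]
  calc ∑ s : S, ∑ p : ParAct A P i, ∑ ai : A i,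
        |gradV γ Ptr r μ P θt i s p ai - gradV γ Ptr r μ P θ i s p ai|
      ≤ ∑ s₀ : S, ∑ p₀ : ParAct A P i, ∑ a₀ : A i, ∑' t : ℕ,
          |γ^t * Tder Ptr μ P f (basis P i s₀ p₀ a₀) θt t
            - γ^t * Tder Ptr μ P f (basis P i s₀ p₀ a₀) θ t| := step1
    _ = ∑' t : ℕ, ∑ s₀ : S, ∑ p₀ : ParAct A P i, ∑ a₀ : A i,
          |γ^t * Tder Ptr μ P f (basis P i s₀ p₀ a₀) θt t
            - γ^t * Tder Ptr μ P f (basis P i s₀ p₀ a₀) θ t| := step2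
    _ ≤ ∑' t : ℕ, γ^t * ((4*D*(t:ℝ)^2 + 10*D*t + 6*D) * C) := step3
    _ = (4*D*C) * (2*γ/(1-γ)^3) + ((6*D*C) * (γ/(1-γ)^2) + (6*D*C) * (1-γ)⁻¹) := hval
    _ ≤ 8 * (rmax - rmin) / (1-γ)^3 * D := hfinal
end BNPG
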